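/- arXiv:2601.08755 — 6 statements merged into one kernel-verified Lean document; each statement's English description precedes it below -/
import Mathlib

section
/- The support function σ(x,q) := sup{ ⟨q,p⟩ : p ∈ C_x } is jointly continuous on Ω̄ × ℝⁿ, and for every x ∈ Ω̄ the function q ↦ σ(x,q) is convex. -/
open Set Metric Topology

noncomputable section

abbrev Euc (n : ℕ) := EuclideanSpace ℝ (Fin n)

/-!
For fixed `x`, `q ↦ σ(x, q)` is a supremum of linear functions, hence convex, and it is
`R`-Lipschitz once `C_x ⊆ closedBall 0 R`. This uniform Lipschitz bound reduces joint continuity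
to continuity in `x` for each fixed `q`. Lower semicontinuity in `x` holds because a near-maximiser
`p₀ ∈ C_{x₀}` can be moved slightly to a point `p'` with `(x₀, p')` interior to `C`, so that
`p' ∈ C_x` for all nearby `x`. Upper semicontinuity follows from the closedness of `C` by the tube
lemma over the compact ball that contains every slice.
-/

open scoped NNReal

section SupportFunction

variable {E : Type*} [NormedAddCommGroup E] [InnerProductSpace ℝ E]

def supportFunction (K : Set E) (q : E) : ℝ :=
  sSup ((fun p => inner ℝ q p) '' K)

variable {K : Set E} {R : ℝ≥0}

theorem bddAbove_inner_image (hR : K ⊆ closedBall 0 R) (q : E) :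
    BddAbove ((fun p => inner ℝ q p) '' K) := by
  refine ⟨‖q‖ * R, forall_mem_image.2 fun p hp => ?_⟩
  calc inner ℝ q p ≤ ‖q‖ * ‖p‖ := real_inner_le_norm q p
    _ ≤ ‖q‖ * R := by gcongr; simpa using hR hp

theorem inner_le_supportFunction (hR : K ⊆ closedBall 0 R) {p : E} (hp : p ∈ K) (q : E) :
    inner ℝ q p ≤ supportFunction K q :=
  le_csSup (bddAbove_inner_image hR q) (mem_image_of_mem _ hp)

theorem supportFunction_le {q : E} {c : ℝ} (hK : K.Nonempty)
    (h : ∀ p ∈ K, inner ℝ q p ≤ c) : supportFunction K q ≤ c :=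
  csSup_le (hK.image _) (forall_mem_image.2 h)

theorem lipschitzWith_supportFunction (hK : K.Nonempty) (hR : K ⊆ closedBall 0 R) :
    LipschitzWith R (supportFunction K) := by
  refine LipschitzWith.of_le_add_mul R fun q q' => supportFunction_le hK fun p hp => ?_
  have hp' : ‖p‖ ≤ R := by simpa using hR hp
  calc inner ℝ q p = inner ℝ q' p + inner ℝ (q - q') p := by rw [inner_sub_left]; ring
    _ ≤ supportFunction K q' + ‖q - q'‖ * R := by
      gcongr
      · exact inner_le_supportFunction hR hp q'
      · exact (real_inner_le_norm _ _).trans (by gcongr)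
    _ = supportFunction K q' + R * dist q q' := by rw [dist_eq_norm, mul_comm]

theorem convexOn_supportFunction (hK : K.Nonempty) (hR : K ⊆ closedBall 0 R) :
    ConvexOn ℝ univ (supportFunction K) := by
  refine ⟨convex_univ, fun q₁ _ q₂ _ a b ha hb _ => supportFunction_le hK fun p hp => ?_⟩
  rw [inner_add_left, real_inner_smul_left, real_inner_smul_left, smul_eq_mul, smul_eq_mul]
  gcongr <;> exact inner_le_supportFunction hR hp _

end SupportFunction

section Slices

variable {X E : Type*} [TopologicalSpace X] {C : Set (X × E)} {s : Set X} {g : E → ℝ}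

theorem lowerSemicontinuousOn_sSup_image_slice [PseudoMetricSpace E] (hg : Continuous g)
    (hint : ∀ xp ∈ C, ∀ δ : ℝ, 0 < δ →
      ∃ p' : E, dist xp.2 p' ≤ δ ∧ C ∈ 𝓝[s ×ˢ univ] (xp.1, p'))
    (hne : ∀ x ∈ s, (Prod.mk x ⁻¹' C).Nonempty)
    (hbdd : ∀ x ∈ s, BddAbove (g '' (Prod.mk x ⁻¹' C))) :
    LowerSemicontinuousOn (fun x => sSup (g '' (Prod.mk x ⁻¹' C))) s := by
  intro x₀ hx₀ y hy
  obtain ⟨_, ⟨p₀, hp₀, rfl⟩, hyp₀⟩ :=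
    exists_lt_of_lt_csSup ((hne x₀ hx₀).image g) hy
  obtain ⟨ε, hε, hnear⟩ :=
    Metric.eventually_nhds_iff.1 (hg.continuousAt.eventually (lt_mem_nhds hyp₀))
  obtain ⟨p', hp'₀, hp'C⟩ := hint (x₀, p₀) hp₀ (ε / 2) (half_pos hε)
  have hyp' : y < g p' := hnear (by rw [dist_comm]; linarith)
  have hslice : Filter.Tendsto (fun x => (x, p')) (𝓝[s] x₀) (𝓝[s ×ˢ univ] (x₀, p')) :=
    (continuous_id.prodMk continuous_const).continuousWithinAt.tendsto_nhdsWithin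
      fun x hx => ⟨hx, mem_univ p'⟩
  filter_upwards [hslice hp'C, self_mem_nhdsWithin] with x hxC hx
  exact hyp'.trans_le (le_csSup (hbdd x hx) (mem_image_of_mem g hxC))

theorem upperSemicontinuousOn_sSup_image_slice [TopologicalSpace E] (hg : Continuous g)
    (hC : IsClosed C) {K : Set E} (hK : IsCompact K) (hsub : ∀ x ∈ s, Prod.mk x ⁻¹' C ⊆ K)
    (hne : ∀ x ∈ s, (Prod.mk x ⁻¹' C).Nonempty) :
    UpperSemicontinuousOn (fun x => sSup (g '' (Prod.mk x ⁻¹' C))) s := by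
  intro x₀ hx₀ y hy
  obtain ⟨y', hy', hy'y⟩ := exists_between hy
  have hbdd : ∀ x ∈ s, BddAbove (g '' (Prod.mk x ⁻¹' C)) := fun x hx =>
    (hK.image hg).bddAbove.mono (image_mono (hsub x hx))
  have htube : ∀ᶠ x in 𝓝 x₀, ∀ p ∈ K, (x, p) ∈ C → g p < y' := by
    refine hK.eventually_forall_of_forall_eventually fun p _ => ?_
    have hopen : IsOpen (Cᶜ ∪ {z : X × E | g z.2 < y'}) :=
      hC.isOpen_compl.union (isOpen_lt (hg.comp continuous_snd) continuous_const)
    refine Filter.eventually_of_mem (hopen.mem_nhds ?_) fun z hz hzC =>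
      hz.resolve_left (not_not.2 hzC)
    by_cases h : (x₀, p) ∈ C
    · exact Or.inr ((le_csSup (hbdd x₀ hx₀) (mem_image_of_mem g h)).trans_lt hy')
    · exact Or.inl h
  filter_upwards [self_mem_nhdsWithin, nhdsWithin_le_nhds htube] with x hx hxK
  exact (csSup_le ((hne x hx).image g) (forall_mem_image.2 fun p hp =>
    (hxK p (hsub x hx hp) hp).le)).trans_lt hy'y

theorem continuousOn_sSup_image_slice [PseudoMetricSpace E] (hg : Continuous g)
    (hC : IsClosed C)
    (hint : ∀ xp ∈ C, ∀ δ : ℝ, 0 < δ →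
      ∃ p' : E, dist xp.2 p' ≤ δ ∧ C ∈ 𝓝[s ×ˢ univ] (xp.1, p'))
    {K : Set E} (hK : IsCompact K) (hsub : ∀ x ∈ s, Prod.mk x ⁻¹' C ⊆ K)
    (hne : ∀ x ∈ s, (Prod.mk x ⁻¹' C).Nonempty) :
    ContinuousOn (fun x => sSup (g '' (Prod.mk x ⁻¹' C))) s :=
  continuousOn_iff_lower_upperSemicontinuousOn.2
    ⟨lowerSemicontinuousOn_sSup_image_slice hg hint hne fun x hx =>
        (hK.image hg).bddAbove.mono (image_mono (hsub x hx)),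
      upperSemicontinuousOn_sSup_image_slice hg hC hK hsub hne⟩

end Slices

theorem support_function_continuous_and_convex_general
    {n : ℕ}
    (Ω : Set (Euc n))
    (C : Set (Euc n × Euc n))
    (hCclosed : IsClosed C)
    (hint : ∀ xp ∈ C, ∀ δ : ℝ, 0 < δ →
      ∃ p' : Euc n, dist xp.2 p' ≤ δ ∧ C ∈ 𝓝[Ω ×ˢ (univ : Set (Euc n))] ((xp.1 : Euc n), p'))
    (σl σu : ℝ) (hσl : 0 < σl)
    (hball : ∀ x ∈ Ω, ball (0 : Euc n) σl ⊆ {p : Euc n | (x, p) ∈ C} ∧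
      {p : Euc n | (x, p) ∈ C} ⊆ ball (0 : Euc n) σu) :
    ContinuousOn
      (fun xq : Euc n × Euc n =>
        sSup ((fun p : Euc n => (inner ℝ xq.2 p : ℝ)) '' {p : Euc n | (xq.1, p) ∈ C}))
      (Ω ×ˢ (univ : Set (Euc n))) ∧
    ∀ x ∈ Ω, ConvexOn ℝ (univ : Set (Euc n))
      (fun q : Euc n => sSup ((fun p : Euc n => (inner ℝ q p : ℝ)) '' {p : Euc n | (x, p) ∈ C})) := by
  have hne : ∀ x ∈ Ω, (Prod.mk x ⁻¹' C).Nonempty := fun x hx =>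
    ⟨0, (hball x hx).1 (mem_ball_self hσl)⟩
  have hR : ∀ x ∈ Ω, Prod.mk x ⁻¹' C ⊆ closedBall 0 σu.toNNReal := fun x hx =>
    (hball x hx).2.trans <| ball_subset_closedBall.trans <|
      closedBall_subset_closedBall (Real.le_coe_toNNReal σu)
  refine ⟨?_, fun x hx => convexOn_supportFunction (hne x hx) (hR x hx)⟩
  refine continuousOn_prod_of_continuousOn_lipschitzOnWith' _ σu.toNNReal
    (fun x hx => (lipschitzWith_supportFunction (hne x hx) (hR x hx)).lipschitzOnWith)
    fun q _ => ?_
  exact continuousOn_sSup_image_slice (continuous_const.inner continuous_id) hCclosed hint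
    (isCompact_closedBall 0 σu.toNNReal) hR hne

/-- The support function `σ(x,q) := sup{⟨q,p⟩ : p ∈ C_x}` is jointly
continuous on `Ω̄ × ℝⁿ`, and for every `x ∈ Ω̄` the map `q ↦ σ(x,q)` is convex. -/
theorem support_function_continuous_and_convex
    {n : ℕ} (hn : 1 ≤ n)
    (Ω : Set (Euc n)) (hΩne : Ω.Nonempty)
    (C : Set (Euc n × Euc n)) (hCsub : C ⊆ Ω ×ˢ (univ : Set (Euc n)))
    (hCclosed : IsClosed C)
    (hconv : ∀ x ∈ Ω, Convex ℝ {p : Euc n | (x, p) ∈ C})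
    (hint : ∀ xp ∈ C, ∀ δ : ℝ, 0 < δ →
      ∃ p' : Euc n, dist xp.2 p' ≤ δ ∧ C ∈ 𝓝[Ω ×ˢ (univ : Set (Euc n))] ((xp.1 : Euc n), p'))
    (σl σu : ℝ) (hσl : 0 < σl) (hσlu : σl ≤ σu)
    (hball : ∀ x ∈ Ω, ball (0 : Euc n) σl ⊆ {p : Euc n | (x, p) ∈ C} ∧
      {p : Euc n | (x, p) ∈ C} ⊆ ball (0 : Euc n) σu) :
    ContinuousOn
      (fun xq : Euc n × Euc n =>
        sSup ((fun p : Euc n => (inner ℝ xq.2 p : ℝ)) '' {p : Euc n | (xq.1, p) ∈ C}))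
      (Ω ×ˢ (univ : Set (Euc n))) ∧
    ∀ x ∈ Ω, ConvexOn ℝ (univ : Set (Euc n))
      (fun q : Euc n => sSup ((fun p : Euc n => (inner ℝ q p : ℝ)) '' {p : Euc n | (x, p) ∈ C})) :=
  support_function_continuous_and_convex_general Ω C hCclosed hint σl σu hσl hball
end
end

section
/- Assume additionally that for every x ∈ Ω̄ the function q ↦ σ(x,q) is convex and positively 1-homogeneous. Then for every x ∈ Ω̄ the infimum defining v(x) is attained: there exists an admissible curve γ for x with ∫₀¹ σ(γ(s),γ′(s)) ds = v(x). -/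
open Set Metric MeasureTheory

noncomputable section

/-- An admissible curve for the point `x`: a Lipschitz curve `γ : [0,1] → ℝⁿ` with values
in `Ω̄`, starting in `V̄₀` and ending at `x`. -/
def IsAdmissible {n : ℕ} (Ω V₀ : Set (Euc n)) (x : Euc n) (γ : ℝ → Euc n) : Prop :=
  (∃ K : NNReal, LipschitzWith K γ) ∧ (∀ s ∈ Icc (0:ℝ) 1, γ s ∈ Ω) ∧ γ 0 ∈ V₀ ∧ γ 1 = x

/-- The cost of a curve: `∫₀¹ σ(γ(s), γ′(s)) ds`. -/
def curveCost {n : ℕ} (σ : Euc n → Euc n → ℝ) (γ : ℝ → Euc n) : ℝ :=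
  ∫ s in (0:ℝ)..1, σ (γ s) (deriv γ s)

/-- The time-of-attachment function: infimum of costs over admissible curves. -/
def timeOfAttachment {n : ℕ} (Ω V₀ : Set (Euc n)) (σ : Euc n → Euc n → ℝ) (x : Euc n) : ℝ :=
  sInf (curveCost σ '' {γ : ℝ → Euc n | IsAdmissible Ω V₀ x γ})

/-- The geodesic distance on `Ω̄`. -/
def geodDist {n : ℕ} (Ω : Set (Euc n)) (x y : Euc n) : ℝ :=
  sInf {L : ℝ | ∃ γ : ℝ → Euc n, (∃ K : NNReal, LipschitzWith K γ) ∧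
    (∀ s ∈ Icc (0:ℝ) 1, γ s ∈ Ω) ∧ γ 0 = y ∧ γ 1 = x ∧
    L = ∫ s in (0:ℝ)..1, ‖deriv γ s‖}

open intervalIntegral Filter Topology
open scoped NNReal

/-!
Take a minimizing sequence of admissible curves, of costs `c_k → v x`, and reparametrize each
one on `[0, 1]` at constant running cost. Since `σ(y, q) ≥ σ_* ‖q‖`, the reparametrized curves
`γ_k` are `L`-Lipschitz for a common `L` and stay in a fixed compact subset of `Ω̄`, so they
converge pointwise along an ultrafilter to an admissible curve `γ`. Lower semicontinuity of the
cost is checked pointwise: Jensen's inequality for the convex, positively homogeneous `σ(y, ·)`,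
together with the uniform continuity of `σ` on compact sets, gives
`σ(γ_k t, γ_k (t + h) - γ_k t) ≤ h (c_k + ε L)` for all small `h`, uniformly in `k`. Letting
`k → ∞`, then `h → 0` and `ε → 0`, yields `σ(γ t, γ' t) ≤ v x` almost everywhere.
-/

theorem ContinuousOn.continuous_apply_of_mem {X Y Z : Type*} [TopologicalSpace X]
    [TopologicalSpace Y] [TopologicalSpace Z] {σ : X → Y → Z} {Ω : Set X}
    (hσ : ContinuousOn (fun p : X × Y => σ p.1 p.2) (Ω ×ˢ univ)) {y : X} (hy : y ∈ Ω) :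
    Continuous (σ y) :=
  hσ.comp_continuous (Continuous.prodMk_right y) fun _ => ⟨hy, mem_univ _⟩

theorem ContinuousOn.aestronglyMeasurable_comp {α X : Type*} [MeasurableSpace α]
    [TopologicalSpace X] [MeasurableSpace X] [OpensMeasurableSpace X] {F : X → ℝ} {S : Set X}
    (hF : ContinuousOn F S) {g : α → X} (hg : Measurable g) {μ : Measure α} {A : Set α}
    (hA : MeasurableSet A) (hgA : MapsTo g A S) :
    AEStronglyMeasurable (F ∘ g) (μ.restrict A) := by
  rw [← map_comap_subtype_coe hA, (MeasurableEmbedding.subtype_coe hA).aestronglyMeasurable_map_iff]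
  have hgA' : Measurable (hgA.restrict g A S) := (hg.comp measurable_subtype_coe).subtype_mk
  exact ((continuousOn_iff_continuous_domRestrict.mp hF).measurable.comp hgA').aestronglyMeasurable

theorem LipschitzWith.of_tendsto {ι α β : Type*} [PseudoMetricSpace α] [PseudoMetricSpace β]
    {l : Filter ι} [l.NeBot] {f : ι → α → β} {g : α → β} {K : ℝ≥0}
    (hf : ∀ i, LipschitzWith K (f i)) (hfg : ∀ x, Tendsto (fun i => f i x) l (𝓝 (g x))) :
    LipschitzWith K g :=
  LipschitzWith.of_dist_le_mul fun x y =>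
    le_of_tendsto ((hfg x).dist (hfg y)) (Eventually.of_forall fun i => (hf i).dist_le_mul x y)

theorem exists_lipschitzWith_forall_tendsto {ι α X : Type*} [PseudoMetricSpace α]
    [PseudoMetricSpace X] (U : Ultrafilter ι) {B : Set X} (hB : IsCompact B) {p : ι → α → X}
    {L : ℝ≥0} (hp : ∀ i, LipschitzWith L (p i)) (hpB : ∀ i t, p i t ∈ B) :
    ∃ γ : α → X, LipschitzWith L γ ∧ ∀ t, γ t ∈ B ∧ Tendsto (fun i => p i t) U (𝓝 (γ t)) := by
  have hlim : ∀ t, ∃ y ∈ B, Tendsto (fun i => p i t) U (𝓝 y) := fun t =>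
    hB.ultrafilter_le_nhds (U.map fun i => p i t)
      (le_principal_iff.2
        (show (fun i => p i t) ⁻¹' B ∈ (U : Filter ι) from univ_mem' fun i => hpB i t))
  choose γ hγB hγ using hlim
  exact ⟨γ, LipschitzWith.of_tendsto hp hγ, fun t => ⟨hγB t, hγ t⟩⟩

theorem exists_monotoneOn_rightInvOn {F : ℝ → ℝ} {a b : ℝ} (hab : a ≤ b)
    (hF : ContinuousOn F (Icc a b)) :
    ∃ s : ℝ → ℝ, MonotoneOn s (Icc (F a) (F b)) ∧ MapsTo s (Icc (F a) (F b)) (Icc a b) ∧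
      RightInvOn s F (Icc (F a) (F b)) := by
  have hmem : ∀ y ∈ Icc (F a) (F b), sInf (Icc a b ∩ F ⁻¹' {y}) ∈ Icc a b ∩ F ⁻¹' {y} := by
    intro y hy
    obtain ⟨u, hu, rfl⟩ := intermediate_value_Icc hab hF hy
    exact (hF.preimage_isClosed_of_isClosed isClosed_Icc isClosed_singleton).csInf_mem
      ⟨u, hu, rfl⟩ ⟨a, fun v hv => hv.1.1⟩
  refine ⟨fun y => sInf (Icc a b ∩ F ⁻¹' {y}), fun y hy y' hy' hyy' => ?_,
    fun y hy => (hmem y hy).1, fun y hy => (hmem y hy).2⟩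
  set s' := sInf (Icc a b ∩ F ⁻¹' {y'})
  obtain ⟨⟨hs'a, hs'b⟩, hFs' : F s' = y'⟩ := hmem y' hy'
  have hy_mem : y ∈ Icc (F a) (F s') := ⟨hy.1, hFs' ▸ hyy'⟩
  obtain ⟨u, hu, hFu⟩ :=
    intermediate_value_Icc hs'a (hF.mono (Icc_subset_Icc le_rfl hs'b)) hy_mem
  exact (csInf_le (s := Icc a b ∩ F ⁻¹' {y}) ⟨a, fun v hv => hv.1.1⟩
    ⟨⟨hu.1, hu.2.trans hs'b⟩, hFu⟩).trans hu.2

theorem exists_monotone_map_eq_mul_projIcc {F : ℝ → ℝ} (hF : ContinuousOn F (Icc 0 1))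
    (hF0 : F 0 = 0) (hF1 : 0 ≤ F 1) :
    ∃ τ : ℝ → ℝ, Monotone τ ∧ (∀ t, τ t ∈ Icc 0 1) ∧
      ∀ t, F (τ t) = F 1 * projIcc 0 1 zero_le_one t := by
  obtain ⟨s, hs_mono, hs_maps, hs_inv⟩ := exists_monotoneOn_rightInvOn zero_le_one hF
  have hmaps : ∀ t, F 1 * projIcc (0 : ℝ) 1 zero_le_one t ∈ Icc (F 0) (F 1) := fun t => by
    have := (projIcc (0 : ℝ) 1 zero_le_one t).2
    rw [hF0]
    exact ⟨mul_nonneg hF1 this.1, mul_le_of_le_one_right hF1 this.2⟩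
  refine ⟨fun t => s (F 1 * projIcc 0 1 zero_le_one t), fun t t' htt' => ?_,
    fun t => hs_maps (hmaps t), fun t => hs_inv (hmaps t)⟩
  exact hs_mono (hmaps t) (hmaps t') (by gcongr; exact monotone_projIcc _ htt')

theorem projIcc_sub_projIcc_le {s t : ℝ} (hst : s ≤ t) :
    (projIcc 0 1 zero_le_one t : ℝ) - projIcc 0 1 zero_le_one s ≤ t - s := by
  have := (LipschitzWith.projIcc (zero_le_one' ℝ)).dist_le_mul t s
  rw [NNReal.coe_one, one_mul, Subtype.dist_eq, Real.dist_eq, Real.dist_eq] at this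
  exact (le_abs_self _).trans (this.trans (abs_of_nonneg (sub_nonneg.2 hst)).le)

section Control

variable {E : Type*} [NormedAddCommGroup E] {Γ : ℝ → E} {F : ℝ → ℝ} {κ : ℝ} {L : ℝ≥0}

theorem dist_le_of_control (hκ : 0 < κ)
    (hcontrol : ∀ a b, 0 ≤ a → a ≤ b → b ≤ 1 → κ * ‖Γ b - Γ a‖ ≤ F b - F a)
    (hF0 : F 0 = 0) (hFL : F 1 ≤ κ * L) {u : ℝ} (hu : u ∈ Icc 0 1) :
    dist (Γ u) (Γ 1) ≤ L := by
  rw [dist_eq_norm, norm_sub_rev]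
  refine le_of_mul_le_mul_left ?_ hκ
  have := hcontrol 0 u le_rfl hu.1 hu.2
  have := mul_nonneg hκ.le (norm_nonneg (Γ u - Γ 0))
  linarith [hcontrol u 1 hu.1 hu.2 le_rfl]

theorem eq_of_control (hκ : 0 < κ)
    (hcontrol : ∀ a b, 0 ≤ a → a ≤ b → b ≤ 1 → κ * ‖Γ b - Γ a‖ ≤ F b - F a)
    {a b : ℝ} (ha : 0 ≤ a) (hab : a ≤ b) (hb : b ≤ 1) (hF : F a = F b) : Γ a = Γ b := by
  have := hcontrol a b ha hab hb
  rw [hF, sub_self] at this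
  exact (sub_eq_zero.1 (norm_le_zero_iff.1 (nonpos_of_mul_nonpos_right this hκ))).symm

theorem exists_lipschitzWith_comp_of_control (hκ : 0 < κ)
    (hcontrol : ∀ a b, 0 ≤ a → a ≤ b → b ≤ 1 → κ * ‖Γ b - Γ a‖ ≤ F b - F a)
    (hF : ContinuousOn F (Icc 0 1)) (hF0 : F 0 = 0) (hFL : F 1 ≤ κ * L) :
    ∃ τ : ℝ → ℝ, Monotone τ ∧ (∀ t, τ t ∈ Icc 0 1) ∧
      (∀ t, F (τ t) = F 1 * projIcc 0 1 zero_le_one t) ∧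
      LipschitzWith L (Γ ∘ τ) ∧ Γ (τ 0) = Γ 0 ∧ Γ (τ 1) = Γ 1 := by
  have hF1 : 0 ≤ F 1 := by
    simpa [hF0] using
      (mul_nonneg hκ.le (norm_nonneg _)).trans (hcontrol 0 1 le_rfl zero_le_one le_rfl)
  obtain ⟨τ, hτ, hτI, hFτ⟩ := exists_monotone_map_eq_mul_projIcc hF hF0 hF1
  refine ⟨τ, hτ, hτI, hFτ, LipschitzWith.of_dist_le_mul fun s t => ?_,
    (eq_of_control hκ hcontrol le_rfl (hτI 0).1 (hτI 0).2 (by simp [hFτ, hF0])).symm,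
    eq_of_control hκ hcontrol (hτI 1).1 (hτI 1).2 le_rfl (by simp [hFτ])⟩
  wlog hst : s ≤ t generalizing s t
  · rw [dist_comm, dist_comm s]
    exact this t s (le_of_not_ge hst)
  rw [dist_comm, dist_eq_norm, Real.dist_eq, abs_of_nonpos (sub_nonpos.2 hst), neg_sub]
  refine le_of_mul_le_mul_left ?_ hκ
  calc κ * ‖Γ (τ t) - Γ (τ s)‖ ≤ F (τ t) - F (τ s) :=
        hcontrol _ _ (hτI s).1 (hτ hst) (hτI t).2
    _ = F 1 * ((projIcc 0 1 zero_le_one t : ℝ) - projIcc 0 1 zero_le_one s) := by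
        rw [hFτ, hFτ]; ring
    _ ≤ κ * L * (t - s) := mul_le_mul hFL (projIcc_sub_projIcc_le hst)
          (sub_nonneg.2 (Subtype.coe_le_coe.2 (monotone_projIcc _ hst))) (by positivity)
    _ = κ * (L * (t - s)) := by ring

end Control

section NormedSpace

variable {E : Type*} [NormedAddCommGroup E] [NormedSpace ℝ E]

def IsModulusOn (σ : E → E → ℝ) (B : Set E) (ε δ : ℝ) : Prop :=
  ∀ y ∈ B, ∀ z ∈ B, dist y z < δ → ∀ q, σ y q ≤ σ z q + ε * ‖q‖

theorem map_deriv_le_of_eventually_map_sub_le {N : E → ℝ} (hN : Continuous N)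
    (hhom : ∀ q, ∀ c : ℝ, 0 ≤ c → N (c • q) = c * N q) {γ : ℝ → E} {t M : ℝ}
    (hγ : DifferentiableAt ℝ γ t) (h : ∀ᶠ s in 𝓝[>] 0, N (γ (t + s) - γ t) ≤ s * M) :
    N (deriv γ t) ≤ M := by
  refine le_of_tendsto ((hN.tendsto _).comp hγ.hasDerivAt.tendsto_slope_zero_right) ?_
  filter_upwards [h, self_mem_nhdsWithin] with s hs (hs0 : 0 < s)
  rw [Function.comp_apply, hhom _ _ (inv_nonneg.2 hs0.le)]
  calc s⁻¹ * N (γ (t + s) - γ t) ≤ s⁻¹ * (s * M) := by gcongr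
    _ = M := by field_simp


variable [FiniteDimensional ℝ E] {γ : ℝ → E} {K : ℝ≥0} {σ : E → E → ℝ} {Ω B : Set E}
  {σl σu ε δ : ℝ}

theorem LipschitzWith.intervalIntegrable_comp_deriv {F : Type*} [NormedAddCommGroup F]
    {g : E → F} (hg : Continuous g) (hγ : LipschitzWith K γ) (a b : ℝ) :
    IntervalIntegrable (fun u => g (deriv γ u)) volume a b := by
  obtain ⟨C, hC⟩ := (isCompact_closedBall (0 : E) K).exists_bound_of_continuousOn hg.continuousOn
  exact (intervalIntegrable_const (c := C)).mono_fun'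
    (hg.comp_aestronglyMeasurable (aestronglyMeasurable_deriv γ _))
    (ae_of_all _ fun u => hC _ (mem_closedBall_zero_iff.2 (norm_deriv_le_of_lipschitz hγ)))

theorem LipschitzWith.intervalIntegrable_deriv (hγ : LipschitzWith K γ) (a b : ℝ) :
    IntervalIntegrable (deriv γ) volume a b :=
  hγ.intervalIntegrable_comp_deriv continuous_id a b

theorem LipschitzWith.integral_deriv_eq_sub (hγ : LipschitzWith K γ) (a b : ℝ) :
    ∫ u in a..b, deriv γ u = γ b - γ a := by
  refine (SeparatingDual.eq_iff_forall_dual_eq (R := ℝ)).2 fun ℓ => ?_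
  have hℓγ : LipschitzWith (‖ℓ‖₊ * K) (ℓ ∘ γ) := ℓ.lipschitz.comp hγ
  rw [← ℓ.intervalIntegral_comp_comm (hγ.intervalIntegrable_deriv a b), map_sub]
  refine Eq.trans (integral_congr_ae ?_)
    (hℓγ.lipschitzOnWith (s := uIcc a b)).absolutelyContinuousOnInterval.integral_deriv_eq_sub
  filter_upwards [hγ.ae_differentiableAt] with u hu _
  exact (ℓ.hasFDerivAt.comp_hasDerivAt u hu.hasDerivAt).deriv.symm

theorem LipschitzWith.norm_sub_le_integral_norm_deriv (hγ : LipschitzWith K γ) {a b : ℝ}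
    (hab : a ≤ b) : ‖γ b - γ a‖ ≤ ∫ u in a..b, ‖deriv γ u‖ :=
  hγ.integral_deriv_eq_sub a b ▸ norm_integral_le_integral_norm hab

/-- Jensen's inequality on `[a, b]`, rescaled by homogeneity. -/
theorem ConvexOn.map_sub_le_integral_deriv {N : E → ℝ} (hconv : ConvexOn ℝ univ N)
    (hcont : Continuous N) (hhom : ∀ q, ∀ c : ℝ, 0 ≤ c → N (c • q) = c * N q)
    (hγ : LipschitzWith K γ) {a b : ℝ} (hab : a ≤ b) :
    N (γ b - γ a) ≤ ∫ u in a..b, N (deriv γ u) := by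
  rcases hab.eq_or_lt with rfl | hab
  · simpa using (hhom 0 0 le_rfl).le
  have hvol : volume.real (Ioc a b) = b - a := by simp [hab.le]
  have hjensen := hconv.map_set_average_le hcont.continuousOn isClosed_univ
    (by simp [hab]) (by simp) (ae_of_all _ fun _ => mem_univ _)
    (hγ.intervalIntegrable_deriv a b).1 (hγ.intervalIntegrable_comp_deriv hcont a b).1
  rw [setAverage_eq, setAverage_eq, hvol, hhom _ _ (inv_nonneg.2 (sub_nonneg.2 hab.le)),
    smul_eq_mul, ← integral_of_le hab.le, ← integral_of_le hab.le,
    hγ.integral_deriv_eq_sub] at hjensen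
  exact le_of_mul_le_mul_left hjensen (inv_pos.2 (sub_pos.2 hab))

theorem LipschitzWith.intervalIntegrable_cost
    (hσ : ContinuousOn (fun p : E × E => σ p.1 p.2) (Ω ×ˢ univ)) (hσl : 0 ≤ σl)
    (hσbound : ∀ y ∈ Ω, ∀ q, σl * ‖q‖ ≤ σ y q ∧ σ y q ≤ σu * ‖q‖) (hγ : LipschitzWith K γ)
    {a b : ℝ} (hΩ : ∀ u ∈ uIcc a b, γ u ∈ Ω) :
    IntervalIntegrable (fun u => σ (γ u) (deriv γ u)) volume a b := by
  borelize E
  rw [intervalIntegrable_iff]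
  refine ((hγ.intervalIntegrable_comp_deriv continuous_norm a b).const_mul σu).def'.mono'
    (hσ.aestronglyMeasurable_comp (hγ.continuous.measurable.prodMk (measurable_deriv γ))
      measurableSet_uIoc fun u hu => ⟨hΩ u (uIoc_subset_uIcc hu), mem_univ _⟩) ?_
  filter_upwards [ae_restrict_mem measurableSet_uIoc] with u hu
  obtain ⟨hlow, hup⟩ := hσbound _ (hΩ u (uIoc_subset_uIcc hu)) (deriv γ u)
  rwa [Real.norm_of_nonneg ((by positivity : 0 ≤ σl * ‖deriv γ u‖).trans hlow)]

/-- Uniform continuity on `B × closedBall 0 1`, spread to all of `E` by homogeneity. -/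
theorem IsCompact.exists_isModulusOn (hB : IsCompact B)
    (hσ : ContinuousOn (fun p : E × E => σ p.1 p.2) (B ×ˢ univ))
    (hhom : ∀ y ∈ B, ∀ q, ∀ c : ℝ, 0 ≤ c → σ y (c • q) = c * σ y q) (hε : 0 < ε) :
    ∃ δ > 0, IsModulusOn σ B ε δ := by
  obtain ⟨δ, hδ, hunif⟩ := Metric.uniformContinuousOn_iff.1
    ((hB.prod (isCompact_closedBall (0 : E) 1)).uniformContinuousOn_of_continuous
      (hσ.mono (prod_mono subset_rfl (subset_univ _)))) ε hε
  refine ⟨δ, hδ, fun y hy z hz hyz q => ?_⟩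
  set u := ‖q‖⁻¹ • q
  have hu : u ∈ closedBall (0 : E) 1 := by
    rw [mem_closedBall_zero_iff, norm_smul, norm_inv, norm_norm]
    exact inv_mul_le_one
  have hq : q = ‖q‖ • u := by
    rcases eq_or_ne q 0 with rfl | hq
    · simp
    · rw [smul_smul, mul_inv_cancel₀ (norm_ne_zero_iff.2 hq), one_smul]
  have hyz' : dist (σ y u) (σ z u) < ε :=
    hunif (y, u) ⟨hy, hu⟩ (z, u) ⟨hz, hu⟩ (by simpa [Prod.dist_eq] using hyz)
  rw [Real.dist_eq, abs_lt] at hyz'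
  have hy' : σ y q = ‖q‖ * σ y u := by rw [← hhom y hy _ _ (norm_nonneg _), ← hq]
  have hz' : σ z q = ‖q‖ * σ z u := by rw [← hhom z hz _ _ (norm_nonneg _), ← hq]
  rw [hy', hz']
  nlinarith [norm_nonneg q]

theorem mul_integral_norm_deriv_le_integral (hγ : LipschitzWith K γ) {a b : ℝ} (hab : a ≤ b)
    (hint : IntervalIntegrable (fun u => σ (γ u) (deriv γ u)) volume a b)
    (hlow : ∀ u ∈ Icc a b, ∀ q, σl * ‖q‖ ≤ σ (γ u) q) :
    σl * ∫ u in a..b, ‖deriv γ u‖ ≤ ∫ u in a..b, σ (γ u) (deriv γ u) := by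
  rw [← intervalIntegral.integral_const_mul]
  exact integral_mono_on hab ((hγ.intervalIntegrable_comp_deriv continuous_norm a b).const_mul σl)
    hint fun u hu => hlow u hu _

theorem mul_norm_sub_le_integral (hσl : 0 ≤ σl) (hγ : LipschitzWith K γ) {a b : ℝ} (hab : a ≤ b)
    (hint : IntervalIntegrable (fun u => σ (γ u) (deriv γ u)) volume a b)
    (hlow : ∀ u ∈ Icc a b, ∀ q, σl * ‖q‖ ≤ σ (γ u) q) :
    σl * ‖γ b - γ a‖ ≤ ∫ u in a..b, σ (γ u) (deriv γ u) :=
  (mul_le_mul_of_nonneg_left (hγ.norm_sub_le_integral_norm_deriv hab) hσl).trans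
    (mul_integral_norm_deriv_le_integral hγ hab hint hlow)

/-- Jensen's inequality for `σ (γ a)`; the modulus then moves the base point along the arc,
which the cost bound keeps `δ`-short. -/
theorem apply_sub_le_integral_add_mul (hσl : 0 < σl) (hγ : LipschitzWith K γ) {a b r : ℝ}
    (hab : a ≤ b) (hint : IntervalIntegrable (fun u => σ (γ u) (deriv γ u)) volume a b)
    (hlow : ∀ u ∈ Icc a b, ∀ q, σl * ‖q‖ ≤ σ (γ u) q)
    (hconv : ConvexOn ℝ univ (σ (γ a))) (hcont : Continuous (σ (γ a)))
    (hhom : ∀ q, ∀ c : ℝ, 0 ≤ c → σ (γ a) (c • q) = c * σ (γ a) q)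
    (hmod : IsModulusOn σ B ε δ) (hε : 0 ≤ ε) (hγB : ∀ u ∈ Icc a b, γ u ∈ B)
    (hcost : ∫ u in a..b, σ (γ u) (deriv γ u) ≤ σl * r) (hrδ : r < δ) :
    σ (γ a) (γ b - γ a) ≤ (∫ u in a..b, σ (γ u) (deriv γ u)) + ε * r := by
  have hnorm := hγ.intervalIntegrable_comp_deriv continuous_norm
  have hlen : ∫ u in a..b, ‖deriv γ u‖ ≤ r :=
    le_of_mul_le_mul_left ((mul_integral_norm_deriv_le_integral hγ hab hint hlow).trans hcost) hσl
  have hclose : ∀ u ∈ Icc a b, dist (γ a) (γ u) < δ := fun u hu => by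
    rw [dist_comm, dist_eq_norm]
    calc ‖γ u - γ a‖ ≤ ∫ v in a..u, ‖deriv γ v‖ := hγ.norm_sub_le_integral_norm_deriv hu.1
      _ ≤ ∫ v in a..b, ‖deriv γ v‖ :=
        integral_mono_interval le_rfl hu.1 hu.2 (ae_of_all _ fun _ => norm_nonneg _) (hnorm a b)
      _ < δ := hlen.trans_lt hrδ
  calc σ (γ a) (γ b - γ a) ≤ ∫ u in a..b, σ (γ a) (deriv γ u) :=
        hconv.map_sub_le_integral_deriv hcont hhom hγ hab
    _ ≤ ∫ u in a..b, (σ (γ u) (deriv γ u) + ε * ‖deriv γ u‖) :=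
        integral_mono_on hab (hγ.intervalIntegrable_comp_deriv hcont a b)
          (hint.add ((hnorm a b).const_mul ε))
          fun u hu => hmod _ (hγB a ⟨le_rfl, hab⟩) _ (hγB u hu) (hclose u hu) _
    _ = (∫ u in a..b, σ (γ u) (deriv γ u)) + ε * ∫ u in a..b, ‖deriv γ u‖ := by
        rw [integral_add hint ((hnorm a b).const_mul ε), intervalIntegral.integral_const_mul]
    _ ≤ (∫ u in a..b, σ (γ u) (deriv γ u)) + ε * r := by gcongr

/-- `p = Γ ∘ τ`, where `τ` inverts the running cost `t ↦ ∫₀ᵗ σ(Γ, Γ')` rescaled to `[0, 1]`. -/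
theorem exists_reparam_of_integral_le (hσl : 0 < σl)
    (hσcont : ContinuousOn (fun p : E × E => σ p.1 p.2) (Ω ×ˢ univ))
    (hσbound : ∀ y ∈ Ω, ∀ q, σl * ‖q‖ ≤ σ y q ∧ σ y q ≤ σu * ‖q‖)
    (hσconv : ∀ y ∈ Ω, ConvexOn ℝ univ (σ y))
    (hσhom : ∀ y ∈ Ω, ∀ q, ∀ c : ℝ, 0 ≤ c → σ y (c • q) = c * σ y q)
    {Γ : ℝ → E} (hΓ : LipschitzWith K Γ) (hΓΩ : ∀ u ∈ Icc 0 1, Γ u ∈ Ω) {L : ℝ≥0}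
    (hL : ∫ u in 0..1, σ (Γ u) (deriv Γ u) ≤ σl * L) :
    ∃ p : ℝ → E, LipschitzWith L p ∧ (∀ t, p t ∈ Ω ∩ closedBall (Γ 1) L) ∧
      p 0 = Γ 0 ∧ p 1 = Γ 1 ∧
      ∀ ε δ, 0 ≤ ε → IsModulusOn σ (Ω ∩ closedBall (Γ 1) L) ε δ →
        ∀ t h, 0 ≤ t → 0 ≤ h → t + h ≤ 1 → h * L < δ →
          σ (p t) (p (t + h) - p t) ≤ h * ((∫ u in 0..1, σ (Γ u) (deriv Γ u)) + ε * L) := by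
  set c := ∫ u in 0..1, σ (Γ u) (deriv Γ u)
  set F : ℝ → ℝ := fun t => ∫ u in 0..t, σ (Γ u) (deriv Γ u)
  have hint : ∀ a ∈ Icc (0 : ℝ) 1, ∀ b ∈ Icc (0 : ℝ) 1,
      IntervalIntegrable (fun u => σ (Γ u) (deriv Γ u)) volume a b := fun a ha b hb =>
    hΓ.intervalIntegrable_cost hσcont hσl.le hσbound fun u hu => hΓΩ u (uIcc_subset_Icc ha hb hu)
  have hlow : ∀ u ∈ Icc (0 : ℝ) 1, ∀ q, σl * ‖q‖ ≤ σ (Γ u) q := fun u hu q =>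
    (hσbound _ (hΓΩ u hu) q).1
  have hF_sub : ∀ a b, 0 ≤ a → a ≤ b → b ≤ 1 → F b - F a = ∫ u in a..b, σ (Γ u) (deriv Γ u) :=
    fun a b ha hab hb => integral_interval_sub_left (hint 0 (by simp) b ⟨ha.trans hab, hb⟩)
      (hint 0 (by simp) a ⟨ha, hab.trans hb⟩)
  have hcontrol : ∀ a b, 0 ≤ a → a ≤ b → b ≤ 1 → σl * ‖Γ b - Γ a‖ ≤ F b - F a :=
    fun a b ha hab hb => hF_sub a b ha hab hb ▸ mul_norm_sub_le_integral hσl.le hΓ hab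
      (hint a ⟨ha, hab.trans hb⟩ b ⟨ha.trans hab, hb⟩)
      fun u hu => hlow u ⟨ha.trans hu.1, hu.2.trans hb⟩
  have hF0 : F 0 = 0 := integral_same
  have hFc : ContinuousOn F (Icc 0 1) := by
    simpa [uIcc_of_le zero_le_one] using continuousOn_primitive_interval'
      (hint 0 (by simp) 1 (by simp)) left_mem_uIcc
  obtain ⟨τ, hτ, hτI, hFτ, hp_lip, hp0, hp1⟩ :=
    exists_lipschitzWith_comp_of_control hσl hcontrol hFc hF0 hL
  have hball : ∀ u ∈ Icc (0 : ℝ) 1, Γ u ∈ Ω ∩ closedBall (Γ 1) L := fun u hu =>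
    ⟨hΓΩ u hu, dist_le_of_control hσl hcontrol hF0 hL hu⟩
  refine ⟨Γ ∘ τ, hp_lip, fun t => hball _ (hτI t), hp0, hp1, ?_⟩
  intro ε δ hε hmod t h ht hh hth hδ
  have hab : τ t ≤ τ (t + h) := hτ (by linarith)
  have hsub : Icc (τ t) (τ (t + h)) ⊆ Icc 0 1 := Icc_subset_Icc (hτI t).1 (hτI _).2
  have hcost : ∫ u in τ t..τ (t + h), σ (Γ u) (deriv Γ u) = h * c := by
    rw [← hF_sub _ _ (hτI t).1 hab (hτI _).2, hFτ, hFτ, projIcc_of_mem _ ⟨ht, by linarith⟩,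
      projIcc_of_mem _ ⟨by linarith, hth⟩]
    ring
  have hΓa := hΓΩ _ (hτI t)
  refine (apply_sub_le_integral_add_mul hσl hΓ hab (hint _ (hτI t) _ (hτI (t + h)))
    (fun u hu => hlow u (hsub hu)) (hσconv _ hΓa) (hσcont.continuous_apply_of_mem hΓa)
    (hσhom _ hΓa) hmod hε (fun u hu => hball u (hsub hu)) (hcost.trans_le ?_) hδ).trans_eq ?_
  · nlinarith
  · rw [hcost]
    ring

/-- Lower semicontinuity of the cost, checked pointwise. -/
theorem apply_deriv_le_of_tendsto
    (hσcont : ContinuousOn (fun p : E × E => σ p.1 p.2) (Ω ×ˢ univ))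
    (hσhom : ∀ y ∈ Ω, ∀ q, ∀ c : ℝ, 0 ≤ c → σ y (c • q) = c * σ y q)
    (hB : IsCompact B) (hBΩ : B ⊆ Ω) {p : ℕ → ℝ → E} {c : ℕ → ℝ}
    {m : ℝ} {L : ℝ≥0} {U : Ultrafilter ℕ} (hU : (U : Filter ℕ) ≤ atTop) (hpB : ∀ k t, p k t ∈ B)
    (hγB : ∀ t, γ t ∈ B) (hpγ : ∀ t, Tendsto (fun k => p k t) U (𝓝 (γ t)))
    (hc : Tendsto c atTop (𝓝 m)) (hm : 0 ≤ m)
    (hp : ∀ k ε δ, 0 ≤ ε → IsModulusOn σ B ε δ → ∀ t h, 0 ≤ t → 0 ≤ h → t + h ≤ 1 →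
      h * L < δ → σ (p k t) (p k (t + h) - p k t) ≤ h * (c k + ε * L)) :
    ∀ t ∈ Ico (0 : ℝ) 1, σ (γ t) (deriv γ t) ≤ m := by
  intro t ht
  have hγΩ := hBΩ (hγB t)
  by_cases hdiff : ¬DifferentiableAt ℝ γ t
  · have h0 := hσhom _ hγΩ 0 0 le_rfl
    rw [zero_smul, zero_mul] at h0
    rwa [deriv_zero_of_not_differentiableAt hdiff, h0]
  have hlim : ∀ h, Tendsto (fun k => σ (p k t) (p k (t + h) - p k t)) U
      (𝓝 (σ (γ t) (γ (t + h) - γ t))) := fun h =>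
    (hσcont _ ⟨hγΩ, mem_univ _⟩).tendsto.comp (tendsto_nhdsWithin_iff.2
      ⟨(hpγ t).prodMk_nhds ((hpγ (t + h)).sub (hpγ t)),
        Eventually.of_forall fun k => ⟨hBΩ (hpB k t), mem_univ _⟩⟩)
  have hε : ∀ ε > 0, σ (γ t) (deriv γ t) ≤ m + ε * L := by
    intro ε hε
    obtain ⟨δ, hδ, hmod⟩ := hB.exists_isModulusOn (hσcont.mono (prod_mono hBΩ subset_rfl))
      (fun y hy => hσhom y (hBΩ hy)) hε
    refine map_deriv_le_of_eventually_map_sub_le (hσcont.continuous_apply_of_mem hγΩ)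
      (hσhom _ hγΩ) (not_not.1 hdiff) ?_
    have hsmall : ∀ᶠ h in 𝓝 (0 : ℝ), h < 1 - t ∧ h * L < δ :=
      (eventually_lt_nhds (sub_pos.2 ht.2)).and
        (((continuous_id.mul continuous_const).tendsto' (0 : ℝ) 0 (zero_mul _)).eventually
          (gt_mem_nhds hδ))
    filter_upwards [nhdsWithin_le_nhds hsmall, self_mem_nhdsWithin] with h hh (hh0 : 0 < h)
    exact le_of_tendsto_of_tendsto' (hlim h) (((hc.mono_left hU).add_const _).const_mul h)
      fun k => hp k ε δ hε.le hmod t h ht.1 hh0.le (by linarith [hh.1]) hh.2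
  refine ge_of_tendsto (f := fun ε => m + ε * L) (x := 𝓝[>] 0) ?_
    (eventually_nhdsWithin_of_forall hε)
  exact ((continuous_const.add (continuous_id.mul continuous_const)).tendsto' _ _
    (by simp)).mono_left nhdsWithin_le_nhds

end NormedSpace

section OptimalCurves

variable {n : ℕ} {Ω V₀ : Set (Euc n)} {σ : Euc n → Euc n → ℝ} {σl σu : ℝ} {x : Euc n}

theorem IsAdmissible.curveCost_nonneg {γ : ℝ → Euc n} (hγ : IsAdmissible Ω V₀ x γ)
    (hσ : ∀ y ∈ Ω, ∀ q, 0 ≤ σ y q) : 0 ≤ curveCost σ γ :=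
  integral_nonneg zero_le_one fun u hu => hσ _ (hγ.2.1 u hu) _

theorem exists_isAdmissible_curveCost_le_of_tendsto (hΩ : IsClosed Ω) (hV₀ : IsClosed V₀)
    (hσl : 0 < σl) (hσcont : ContinuousOn (fun p : Euc n × Euc n => σ p.1 p.2) (Ω ×ˢ univ))
    (hσbound : ∀ y ∈ Ω, ∀ q, σl * ‖q‖ ≤ σ y q ∧ σ y q ≤ σu * ‖q‖)
    (hσconv : ∀ y ∈ Ω, ConvexOn ℝ univ (σ y))
    (hσhom : ∀ y ∈ Ω, ∀ q, ∀ c : ℝ, 0 ≤ c → σ y (c • q) = c * σ y q)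
    {Γ : ℕ → ℝ → Euc n} (hΓ : ∀ k, IsAdmissible Ω V₀ x (Γ k)) {L : ℝ≥0}
    (hL : ∀ k, curveCost σ (Γ k) ≤ σl * L) {m : ℝ}
    (hm : Tendsto (fun k => curveCost σ (Γ k)) atTop (𝓝 m)) :
    ∃ γ, IsAdmissible Ω V₀ x γ ∧ curveCost σ γ ≤ m := by
  choose p hp_lip hpB hp0 hp1 hp using fun k =>
    exists_reparam_of_integral_le hσl hσcont hσbound hσconv hσhom (hΓ k).1.choose_spec
      (hΓ k).2.1 (hL k)
  simp only [(hΓ _).2.2.2] at hpB hp hp1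
  have hB := (isCompact_closedBall x L).inter_left hΩ
  obtain ⟨γ, hγ_lip, hγ⟩ := exists_lipschitzWith_forall_tendsto (Ultrafilter.of atTop) hB hp_lip hpB
  have hγadm : IsAdmissible Ω V₀ x γ :=
    ⟨⟨L, hγ_lip⟩, fun t _ => (hγ t).1.1,
      hV₀.mem_of_tendsto (hγ 0).2 (Eventually.of_forall fun k => hp0 k ▸ (hΓ k).2.2.1),
      tendsto_nhds_unique (hγ 1).2 (by simp only [hp1]; exact tendsto_const_nhds)⟩
  have hm0 : 0 ≤ m := ge_of_tendsto' hm fun k => (hΓ k).curveCost_nonneg fun y hy q =>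
    (mul_nonneg hσl.le (norm_nonneg q)).trans (hσbound y hy q).1
  have hbound := apply_deriv_le_of_tendsto hσcont hσhom hB inter_subset_left
    (Ultrafilter.of_le atTop) hpB (fun t => (hγ t).1) (fun t => (hγ t).2) hm hm0 hp
  refine ⟨γ, hγadm, ?_⟩
  calc curveCost σ γ ≤ ∫ _ in (0 : ℝ)..1, m :=
        integral_mono_on_of_le_Ioo zero_le_one
          (hγ_lip.intervalIntegrable_cost hσcont hσl.le hσbound fun u _ => (hγ u).1.1)
          intervalIntegrable_const fun t ht => hbound t (Ioo_subset_Ico_self ht)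
    _ = m := by simp

end OptimalCurves

theorem existence_of_optimal_curves_general
    {n : ℕ} (Ω V₀ : Set (Euc n)) (hΩcl : IsClosed Ω) (hV₀cl : IsClosed V₀)
    (σl σu : ℝ) (hσl : 0 < σl) (σ : Euc n → Euc n → ℝ)
    (hσcont : ContinuousOn (fun p : Euc n × Euc n => σ p.1 p.2) (Ω ×ˢ (univ : Set (Euc n))))
    (hσbound : ∀ x ∈ Ω, ∀ q : Euc n, σl * ‖q‖ ≤ σ x q ∧ σ x q ≤ σu * ‖q‖)
    (hadm : ∀ x ∈ Ω, ∃ γ : ℝ → Euc n, IsAdmissible Ω V₀ x γ)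
    (v : Euc n → ℝ) (hv : ∀ x ∈ Ω, v x = timeOfAttachment Ω V₀ σ x)
    (hσconv : ∀ x ∈ Ω, ConvexOn ℝ (univ : Set (Euc n)) (σ x))
    (hσhom : ∀ x ∈ Ω, ∀ q : Euc n, ∀ c : ℝ, 0 ≤ c → σ x (c • q) = c * σ x q) :
    ∀ x ∈ Ω, ∃ γ : ℝ → Euc n, IsAdmissible Ω V₀ x γ ∧ curveCost σ γ = v x := by
  intro x hx
  set S := curveCost σ '' {γ | IsAdmissible Ω V₀ x γ}
  have hS : BddBelow S := ⟨0, by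
    rintro _ ⟨γ, hγ, rfl⟩
    exact hγ.curveCost_nonneg fun y hy q =>
      (mul_nonneg hσl.le (norm_nonneg q)).trans (hσbound y hy q).1⟩
  obtain ⟨c, hc_anti, hc_lim, hcS⟩ := exists_seq_tendsto_sInf (Set.Nonempty.image _ (hadm x hx)) hS
  choose Γ hΓ hΓc using hcS
  have hcL : ∀ k, curveCost σ (Γ k) ≤ σl * (c 0 / σl).toNNReal := fun k => by
    rw [hΓc, Real.coe_toNNReal', ← div_le_iff₀' hσl]
    exact ((div_le_div_iff_of_pos_right hσl).2 (hc_anti (Nat.zero_le k))).trans (le_max_left _ _)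
  obtain ⟨γ, hγ, hγm⟩ := exists_isAdmissible_curveCost_le_of_tendsto hΩcl hV₀cl hσl hσcont
    hσbound hσconv hσhom hΓ hcL (by simpa only [hΓc] using hc_lim)
  rw [hv x hx]
  exact ⟨γ, hγ, le_antisymm hγm (csInf_le hS ⟨γ, hγ, rfl⟩)⟩

/-- If moreover q ↦ σ(x,q) is convex and positively 1-homogeneous for
every x ∈ Ω̄, then the infimum defining v(x) is attained by an admissible curve. -/
theorem existence_of_optimal_curves
    {n : ℕ} (hn : 1 ≤ n)
    (Ω V₀ : Set (Euc n)) (hΩne : Ω.Nonempty) (hΩcl : IsClosed Ω)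
    (hV₀ne : V₀.Nonempty) (hV₀cl : IsClosed V₀) (hV₀sub : V₀ ⊆ Ω)
    (σl σu : ℝ) (hσl : 0 < σl) (hσlu : σl ≤ σu)
    (σ : Euc n → Euc n → ℝ)
    (hσcont : ContinuousOn (fun p : Euc n × Euc n => σ p.1 p.2) (Ω ×ˢ (univ : Set (Euc n))))
    (hσbound : ∀ x ∈ Ω, ∀ q : Euc n, σl * ‖q‖ ≤ σ x q ∧ σ x q ≤ σu * ‖q‖)
    (hadm : ∀ x ∈ Ω, ∃ γ : ℝ → Euc n, IsAdmissible Ω V₀ x γ)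
    (v : Euc n → ℝ) (hvnonneg : ∀ x ∈ Ω, 0 ≤ v x)
    (hv : ∀ x ∈ Ω, v x = timeOfAttachment Ω V₀ σ x)
    (hσconv : ∀ x ∈ Ω, ConvexOn ℝ (univ : Set (Euc n)) (σ x))
    (hσhom : ∀ x ∈ Ω, ∀ q : Euc n, ∀ c : ℝ, 0 ≤ c → σ x (c • q) = c * σ x q) :
    ∀ x ∈ Ω, ∃ γ : ℝ → Euc n, IsAdmissible Ω V₀ x γ ∧ curveCost σ γ = v x :=
  existence_of_optimal_curves_general Ω V₀ hΩcl hV₀cl σl σu hσl σ hσcont hσbound hadm v hv hσconv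
    hσhom
end
end

section
/- For the sublevel sets V(τ) := { x ∈ Ω̄ : v(x) < τ } and all 0 < s ≤ t the following hold: V(s) is nonempty, V(s) ⊆ V(t), every x ∈ V(t) satisfies dist(x, V(s)) ≤ (t − s)/σ_*, and hence the Hausdorff distance between V(t) and V(s) is at most (t − s)/σ_*. -/
/-! The time of attachment vanishes on `V̄₀`, so every `V(s)` with `s > 0` contains `V̄₀`.
If `s ≤ v(x) < t`, take an admissible curve for `x` of cost `c < t` and stop it at the parameter
where the accumulated cost reaches `s - δ`. The stopped curve is admissible for the stopping point
`y`, so `y ∈ V(s)`; the remaining arc costs `c - s + δ`, which is at least `σ_*` times its length,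
hence at least `σ_* |x - y|`. -/

open Set Metric MeasureTheory

noncomputable section

open Filter Topology Interval

theorem LipschitzWith.norm_sub_le_integral_of_norm_deriv_le {E : Type*} [NormedAddCommGroup E]
    [NormedSpace ℝ E] [FiniteDimensional ℝ E] {γ : ℝ → E} {K : NNReal} (hγ : LipschitzWith K γ)
    {a b : ℝ} (hab : a ≤ b) {B : ℝ → ℝ} (hB : ∀ᵐ t, t ∈ Icc a b → ‖deriv γ t‖ ≤ B t)
    (hBi : IntervalIntegrable B volume a b) :
    ‖γ b - γ a‖ ≤ ∫ t in a..b, B t := by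
  -- test against a norming functional `ℓ`, for which `ℓ ∘ γ` is real and absolutely continuous
  obtain ⟨ℓ, hℓ, hℓγ⟩ := exists_dual_vector'' ℝ (γ b - γ a)
  have hac : AbsolutelyContinuousOnInterval (ℓ ∘ γ) a b :=
    ((ℓ.lipschitz.comp hγ).lipschitzOnWith).absolutelyContinuousOnInterval
  calc ‖γ b - γ a‖ = (ℓ ∘ γ) b - (ℓ ∘ γ) a := by simpa using hℓγ.symm
    _ = ∫ t in a..b, deriv (ℓ ∘ γ) t := hac.integral_deriv_eq_sub.symm
    _ ≤ ∫ t in a..b, B t := by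
      refine intervalIntegral.integral_mono_ae_restrict hab hac.intervalIntegrable_deriv hBi ?_
      rw [EventuallyLE, ae_restrict_iff' measurableSet_Icc]
      filter_upwards [hγ.ae_differentiableAt_real, hB] with t hγt hBt ht
      calc deriv (ℓ ∘ γ) t = ℓ (deriv γ t) :=
            (ℓ.hasFDerivAt.comp_hasDerivAt t hγt.hasDerivAt).deriv
        _ ≤ ‖ℓ‖ * ‖deriv γ t‖ := (le_abs_self _).trans (ℓ.le_opNorm _)
        _ ≤ B t := by
          nlinarith [hBt ht, norm_nonneg (deriv γ t), norm_nonneg ℓ]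

theorem LipschitzWith.intervalIntegrable_comp_deriv_s8 {E : Type*} [NormedAddCommGroup E]
    [NormedSpace ℝ E] [FiniteDimensional ℝ E] [MeasurableSpace E] [BorelSpace E]
    {Ω : Set E} {σ : E → E → ℝ}
    (hσ : ContinuousOn (fun p : E × E => σ p.1 p.2) (Ω ×ˢ univ)) {γ : ℝ → E} {K : NNReal}
    (hγ : LipschitzWith K γ) {a b : ℝ} (hγΩ : ∀ t ∈ uIcc a b, γ t ∈ Ω) :
    IntervalIntegrable (fun t => σ (γ t) (deriv γ t)) volume a b := by
  classical
  set S := (γ '' uIcc a b) ×ˢ closedBall (0 : E) K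
  have hS : IsCompact S := (isCompact_uIcc.image hγ.continuous).prod (isCompact_closedBall _ _)
  have hσS : ContinuousOn (fun p : E × E => σ p.1 p.2) S :=
    hσ.mono (prod_mono (image_subset_iff.2 hγΩ) (subset_univ _))
  have hmem : ∀ t ∈ uIcc a b, (γ t, deriv γ t) ∈ S := fun t ht =>
    ⟨mem_image_of_mem _ ht, mem_closedBall_zero_iff.2 (norm_deriv_le_of_lipschitz hγ)⟩
  obtain ⟨C, hC⟩ := hS.exists_bound_of_continuousOn hσS
  have hmeas : Measurable fun t => S.piecewise (fun p : E × E => σ p.1 p.2) 0 (γ t, deriv γ t) :=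
    (hσS.measurable_piecewise continuousOn_const hS.isClosed.measurableSet).comp
      (hγ.continuous.measurable.prodMk (measurable_deriv γ))
  refine IntegrableOn.intervalIntegrable ⟨hmeas.aestronglyMeasurable.congr ?_,
    .restrict_of_bounded (C := C) measure_Icc_lt_top ?_⟩
  · filter_upwards [ae_restrict_mem measurableSet_uIcc] with t ht
    exact piecewise_eq_of_mem _ _ _ (hmem t ht)
  · filter_upwards [ae_restrict_mem measurableSet_uIcc] with t ht
    exact hC _ (hmem t ht)

theorem Metric.hausdorffDist_le_of_subset_of_infDist {α : Type*} [PseudoMetricSpace α]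
    {s t : Set α} {r : ℝ} (hst : s ⊆ t) (hr : 0 ≤ r) (h : ∀ x ∈ t, infDist x s ≤ r) :
    hausdorffDist t s ≤ r :=
  hausdorffDist_le_of_infDist hr h fun _ hx => (infDist_zero_of_mem (hst hx)).trans_le hr

section Attachment

variable {n : ℕ} {Ω V₀ : Set (Euc n)} {σ : Euc n → Euc n → ℝ} {x : Euc n} {γ : ℝ → Euc n}

theorem curveCost_nonneg (hσ : ∀ y ∈ Ω, ∀ q, 0 ≤ σ y q) (hγΩ : ∀ s ∈ Icc (0 : ℝ) 1, γ s ∈ Ω) :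
    0 ≤ curveCost σ γ :=
  intervalIntegral.integral_nonneg zero_le_one fun u hu => hσ _ (hγΩ u hu) _

theorem timeOfAttachment_le_curveCost (hσ : ∀ y ∈ Ω, ∀ q, 0 ≤ σ y q)
    (hγ : IsAdmissible Ω V₀ x γ) : timeOfAttachment Ω V₀ σ x ≤ curveCost σ γ :=
  csInf_le ⟨0, forall_mem_image.2 fun _ hγ' => curveCost_nonneg hσ hγ'.2.1⟩ ⟨γ, hγ, rfl⟩

theorem exists_isAdmissible_curveCost_lt (hx : ∃ γ, IsAdmissible Ω V₀ x γ) {t : ℝ}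
    (ht : timeOfAttachment Ω V₀ σ x < t) : ∃ γ, IsAdmissible Ω V₀ x γ ∧ curveCost σ γ < t := by
  obtain ⟨_, ⟨γ, hγ, rfl⟩, hlt⟩ := exists_lt_of_csInf_lt (Set.Nonempty.image (curveCost σ) hx) ht
  exact ⟨γ, hγ, hlt⟩

theorem timeOfAttachment_eq_zero_of_mem (hσ : ∀ y ∈ Ω, ∀ q, 0 ≤ σ y q)
    (hσ₀ : ∀ y ∈ Ω, σ y 0 = 0) (hV₀ : V₀ ⊆ Ω) (hx : x ∈ V₀) : timeOfAttachment Ω V₀ σ x = 0 := by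
  have hconst : IsAdmissible Ω V₀ x (fun _ => x) :=
    ⟨⟨0, LipschitzWith.const x⟩, fun _ _ => hV₀ hx, hx, rfl⟩
  refine le_antisymm ((timeOfAttachment_le_curveCost hσ hconst).trans_eq ?_) ?_
  · simp [curveCost, hσ₀ x (hV₀ hx)]
  · exact Real.sInf_nonneg (forall_mem_image.2 fun _ hγ' => curveCost_nonneg hσ hγ'.2.1)

theorem IsAdmissible.mem (hγ : IsAdmissible Ω V₀ x γ) : x ∈ Ω :=
  hγ.2.2.2 ▸ hγ.2.1 1 (right_mem_Icc.2 zero_le_one)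

theorem IsAdmissible.truncate (hγ : IsAdmissible Ω V₀ x γ) {r : ℝ} (hr : r ∈ Icc (0 : ℝ) 1) :
    IsAdmissible Ω V₀ (γ r) (fun u => γ (min u r)) := by
  obtain ⟨⟨K, hK⟩, hγΩ, hγ₀, -⟩ := hγ
  refine ⟨⟨K * 1, hK.comp (LipschitzWith.id.min_const r)⟩,
    fun u hu => hγΩ _ ⟨le_min hu.1 hr.1, (min_le_left _ _).trans hu.2⟩, ?_, ?_⟩
  · show γ (min 0 r) ∈ V₀
    rwa [min_eq_left hr.1]
  · show γ (min 1 r) = γ r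
    rw [min_eq_right hr.2]

theorem IsAdmissible.intervalIntegrable_curveIntegrand
    (hσ : ContinuousOn (fun p : Euc n × Euc n => σ p.1 p.2) (Ω ×ˢ univ))
    (hγ : IsAdmissible Ω V₀ x γ) {a b : ℝ} (ha : a ∈ Icc (0 : ℝ) 1) (hb : b ∈ Icc (0 : ℝ) 1) :
    IntervalIntegrable (fun u => σ (γ u) (deriv γ u)) volume a b := by
  obtain ⟨⟨K, hK⟩, hγΩ, -⟩ := hγ
  exact hK.intervalIntegrable_comp_deriv_s8 hσ fun u hu => hγΩ u (uIcc_subset_Icc ha hb hu)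

theorem curveCost_truncate (hσ : ContinuousOn (fun p : Euc n × Euc n => σ p.1 p.2) (Ω ×ˢ univ))
    (hσ₀ : ∀ y ∈ Ω, σ y 0 = 0) (hγ : IsAdmissible Ω V₀ x γ) {r : ℝ} (hr : r ∈ Icc (0 : ℝ) 1) :
    curveCost σ (fun u => γ (min u r)) = ∫ u in 0..r, σ (γ u) (deriv γ u) := by
  set γr : ℝ → Euc n := fun u => γ (min u r)
  have hγr := hγ.truncate hr
  have before : ∀ᵐ u, u ∈ Ι 0 r → σ (γr u) (deriv γr u) = σ (γ u) (deriv γ u) := by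
    filter_upwards [volume.ae_ne r] with u hur hu
    rw [uIoc_of_le hr.1] at hu
    have hloc : γr =ᶠ[𝓝 u] γ := by
      filter_upwards [Iio_mem_nhds (lt_of_le_of_ne hu.2 hur)] with w hw
      simp [γr, min_eq_left (mem_Iio.1 hw).le]
    rw [hloc.eq_of_nhds, hloc.deriv_eq]
  have after : ∀ u ∈ Ι r 1, σ (γr u) (deriv γr u) = 0 := by
    intro u hu
    rw [uIoc_of_le hr.2] at hu
    have hloc : γr =ᶠ[𝓝 u] fun _ => γ r := by
      filter_upwards [Ioi_mem_nhds hu.1] with w hw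
      simp [γr, min_eq_right (mem_Ioi.1 hw).le]
    rw [hloc.eq_of_nhds, hloc.deriv_eq, deriv_const]
    exact hσ₀ _ (hγ.2.1 r hr)
  rw [curveCost, ← intervalIntegral.integral_add_adjacent_intervals
    (hγr.intervalIntegrable_curveIntegrand hσ ⟨le_rfl, zero_le_one⟩ hr)
    (hγr.intervalIntegrable_curveIntegrand hσ hr ⟨zero_le_one, le_rfl⟩),
    intervalIntegral.integral_congr_ae before,
    intervalIntegral.integral_congr_ae (ae_of_all _ after), intervalIntegral.integral_zero,
    add_zero]

variable {σl : ℝ}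

theorem IsAdmissible.exists_timeOfAttachment_le_and_mul_dist_le (hσl : 0 < σl)
    (hσ : ContinuousOn (fun p : Euc n × Euc n => σ p.1 p.2) (Ω ×ˢ univ))
    (hσ_ge : ∀ y ∈ Ω, ∀ q, σl * ‖q‖ ≤ σ y q) (hσ₀ : ∀ y ∈ Ω, σ y 0 = 0)
    (hγ : IsAdmissible Ω V₀ x γ) {τ : ℝ} (hτ₀ : 0 ≤ τ) (hτ : τ ≤ curveCost σ γ) :
    ∃ y ∈ Ω, timeOfAttachment Ω V₀ σ y ≤ τ ∧ σl * dist x y ≤ curveCost σ γ - τ := by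
  have hσ_nonneg : ∀ y ∈ Ω, ∀ q, 0 ≤ σ y q := fun y hy q =>
    (mul_nonneg hσl.le (norm_nonneg q)).trans (hσ_ge y hy q)
  have hint : ∀ {a b : ℝ}, a ∈ Icc (0 : ℝ) 1 → b ∈ Icc (0 : ℝ) 1 →
      IntervalIntegrable (fun u => σ (γ u) (deriv γ u)) volume a b :=
    hγ.intervalIntegrable_curveIntegrand hσ
  have h₀ : (0 : ℝ) ∈ Icc (0 : ℝ) 1 := left_mem_Icc.2 zero_le_one
  have h₁ : (1 : ℝ) ∈ Icc (0 : ℝ) 1 := right_mem_Icc.2 zero_le_one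
  have hcont : ContinuousOn (fun r => ∫ u in 0..r, σ (γ u) (deriv γ u)) (Icc 0 1) := by
    simpa [uIcc_of_le zero_le_one] using
      intervalIntegral.continuousOn_primitive_interval' (hint h₀ h₁) left_mem_uIcc
  obtain ⟨r, hr, hrτ⟩ := intermediate_value_Icc zero_le_one hcont ⟨by simpa using hτ₀, hτ⟩
  refine ⟨γ r, hγ.2.1 r hr, ?_, ?_⟩
  · calc timeOfAttachment Ω V₀ σ (γ r) ≤ curveCost σ (fun u => γ (min u r)) :=
          timeOfAttachment_le_curveCost hσ_nonneg (hγ.truncate hr)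
      _ = τ := (curveCost_truncate hσ hσ₀ hγ hr).trans hrτ
  · obtain ⟨⟨K, hK⟩, hγΩ, -, rfl⟩ := hγ
    have hdisp : ‖γ 1 - γ r‖ ≤ ∫ u in r..1, σ (γ u) (deriv γ u) / σl :=
      hK.norm_sub_le_integral_of_norm_deriv_le hr.2
        (ae_of_all _ fun u hu => (le_div_iff₀' hσl).2 (hσ_ge _ (hγΩ u ⟨hr.1.trans hu.1, hu.2⟩) _))
        ((hint hr h₁).div_const σl)
    calc σl * dist (γ 1) (γ r) ≤ ∫ u in r..1, σ (γ u) (deriv γ u) := by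
          rwa [dist_eq_norm, ← le_div_iff₀' hσl, ← intervalIntegral.integral_div]
      _ = curveCost σ γ - τ := by
          rw [← hrτ, curveCost,
            ← intervalIntegral.integral_add_adjacent_intervals (hint h₀ hr) (hint hr h₁)]
          ring

theorem infDist_timeOfAttachment_sublevel_le (hσl : 0 < σl)
    (hσ : ContinuousOn (fun p : Euc n × Euc n => σ p.1 p.2) (Ω ×ˢ univ))
    (hσ_ge : ∀ y ∈ Ω, ∀ q, σl * ‖q‖ ≤ σ y q) (hσ₀ : ∀ y ∈ Ω, σ y 0 = 0)
    (hx : ∃ γ, IsAdmissible Ω V₀ x γ) {s t : ℝ} (hs : 0 < s) (hst : s ≤ t)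
    (hxt : timeOfAttachment Ω V₀ σ x < t) :
    infDist x {y ∈ Ω | timeOfAttachment Ω V₀ σ y < s} ≤ (t - s) / σl := by
  have hσ_nonneg : ∀ y ∈ Ω, ∀ q, 0 ≤ σ y q := fun y hy q =>
    (mul_nonneg hσl.le (norm_nonneg q)).trans (hσ_ge y hy q)
  obtain ⟨γ, hγ, hγt⟩ := exists_isAdmissible_curveCost_lt hx hxt
  by_cases hxs : timeOfAttachment Ω V₀ σ x < s
  · have hxV : x ∈ {y ∈ Ω | timeOfAttachment Ω V₀ σ y < s} := ⟨hγ.mem, hxs⟩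
    rw [infDist_zero_of_mem hxV]
    exact div_nonneg (sub_nonneg.2 hst) hσl.le
  have hsγ : s ≤ curveCost σ γ := (not_lt.1 hxs).trans (timeOfAttachment_le_curveCost hσ_nonneg hγ)
  rw [le_div_iff₀' hσl]
  refine le_of_forall_pos_le_add fun δ hδ => ?_
  have hδs : 0 < min δ s := lt_min hδ hs
  obtain ⟨y, hyΩ, hyT, hxy⟩ := hγ.exists_timeOfAttachment_le_and_mul_dist_le hσl hσ hσ_ge hσ₀
    (τ := s - min δ s) (by linarith [min_le_right δ s]) (by linarith)
  calc σl * infDist x {y ∈ Ω | timeOfAttachment Ω V₀ σ y < s} ≤ σl * dist x y := by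
        gcongr
        exact infDist_le_dist_of_mem ⟨hyΩ, by linarith⟩
    _ ≤ t - s + δ := by linarith [min_le_left δ s]

end Attachment

theorem sublevel_sets_hausdorff_lipschitz_general
    {n : ℕ}
    (Ω V₀ : Set (Euc n))
    (hV₀ne : V₀.Nonempty) (hV₀sub : V₀ ⊆ Ω)
    (σl σu : ℝ) (hσl : 0 < σl)
    (σ : Euc n → Euc n → ℝ)
    (hσcont : ContinuousOn (fun p : Euc n × Euc n => σ p.1 p.2) (Ω ×ˢ (univ : Set (Euc n))))
    (hσbound : ∀ x ∈ Ω, ∀ q : Euc n, σl * ‖q‖ ≤ σ x q ∧ σ x q ≤ σu * ‖q‖)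
    (hadm : ∀ x ∈ Ω, ∃ γ : ℝ → Euc n, IsAdmissible Ω V₀ x γ)
    (v : Euc n → ℝ)
    (hv : ∀ x ∈ Ω, v x = timeOfAttachment Ω V₀ σ x) :
    ∀ s t : ℝ, 0 < s → s ≤ t →
      {x ∈ Ω | v x < s}.Nonempty ∧
      {x ∈ Ω | v x < s} ⊆ {x ∈ Ω | v x < t} ∧
      (∀ x ∈ {x ∈ Ω | v x < t}, infDist x {x ∈ Ω | v x < s} ≤ (t - s) / σl) ∧
      hausdorffDist {x ∈ Ω | v x < t} {x ∈ Ω | v x < s} ≤ (t - s) / σl := by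
  intro s t hs hst
  have hV : ∀ τ, {x ∈ Ω | v x < τ} = {x ∈ Ω | timeOfAttachment Ω V₀ σ x < τ} := fun τ =>
    Set.ext fun x => and_congr_right fun hx => by rw [hv x hx]
  simp only [hV]
  have hσ_ge : ∀ y ∈ Ω, ∀ q, σl * ‖q‖ ≤ σ y q := fun y hy q => (hσbound y hy q).1
  have hσ_nonneg : ∀ y ∈ Ω, ∀ q, 0 ≤ σ y q := fun y hy q =>
    (mul_nonneg hσl.le (norm_nonneg q)).trans (hσ_ge y hy q)
  have hσ₀ : ∀ y ∈ Ω, σ y 0 = 0 := fun y hy =>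
    le_antisymm (by simpa using (hσbound y hy 0).2) (hσ_nonneg y hy 0)
  have hsub : {x ∈ Ω | timeOfAttachment Ω V₀ σ x < s} ⊆
      {x ∈ Ω | timeOfAttachment Ω V₀ σ x < t} := fun y hy => ⟨hy.1, hy.2.trans_le hst⟩
  have hdist : ∀ x ∈ {x ∈ Ω | timeOfAttachment Ω V₀ σ x < t},
      infDist x {x ∈ Ω | timeOfAttachment Ω V₀ σ x < s} ≤ (t - s) / σl := fun x hx =>
    infDist_timeOfAttachment_sublevel_le hσl hσcont hσ_ge hσ₀ (hadm x hx.1) hs hst hx.2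
  obtain ⟨x₀, hx₀⟩ := hV₀ne
  refine ⟨⟨x₀, hV₀sub hx₀, ?_⟩, hsub, hdist,
    hausdorffDist_le_of_subset_of_infDist hsub (div_nonneg (sub_nonneg.2 hst) hσl.le) hdist⟩
  rwa [timeOfAttachment_eq_zero_of_mem hσ_nonneg hσ₀ hV₀sub hx₀]

/-- The sublevel sets V(τ) = {x ∈ Ω̄ : v(x) < τ} are nonempty, nested,
every point of V(t) is within distance (t−s)/σ_* of V(s), and hence the Hausdorff
distance between V(t) and V(s) is at most (t−s)/σ_*. -/
theorem sublevel_sets_hausdorff_lipschitz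
    {n : ℕ} (hn : 1 ≤ n)
    (Ω V₀ : Set (Euc n)) (hΩne : Ω.Nonempty) (hΩcl : IsClosed Ω)
    (hV₀ne : V₀.Nonempty) (hV₀cl : IsClosed V₀) (hV₀sub : V₀ ⊆ Ω)
    (σl σu : ℝ) (hσl : 0 < σl) (hσlu : σl ≤ σu)
    (σ : Euc n → Euc n → ℝ)
    (hσcont : ContinuousOn (fun p : Euc n × Euc n => σ p.1 p.2) (Ω ×ˢ (univ : Set (Euc n))))
    (hσbound : ∀ x ∈ Ω, ∀ q : Euc n, σl * ‖q‖ ≤ σ x q ∧ σ x q ≤ σu * ‖q‖)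
    (hadm : ∀ x ∈ Ω, ∃ γ : ℝ → Euc n, IsAdmissible Ω V₀ x γ)
    (v : Euc n → ℝ) (hvnonneg : ∀ x ∈ Ω, 0 ≤ v x)
    (hv : ∀ x ∈ Ω, v x = timeOfAttachment Ω V₀ σ x) :
    ∀ s t : ℝ, 0 < s → s ≤ t →
      {x ∈ Ω | v x < s}.Nonempty ∧
      {x ∈ Ω | v x < s} ⊆ {x ∈ Ω | v x < t} ∧
      (∀ x ∈ {x ∈ Ω | v x < t}, infDist x {x ∈ Ω | v x < s} ≤ (t - s) / σl) ∧
      hausdorffDist {x ∈ Ω | v x < t} {x ∈ Ω | v x < s} ≤ (t - s) / σl :=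
  sublevel_sets_hausdorff_lipschitz_general Ω V₀ hV₀ne hV₀sub σl σu hσl σ hσcont hσbound hadm v hv
end
end

section
/- Define Ku(x,t) := ∫₀ᵗ ∫_{ℝⁿ} k(t−s) φ(x−y) u(y,s) dy ds for x ∈ ℝⁿ and t ≥ 0. Then for all x ∈ ℝⁿ and all 0 ≤ t₁ ≤ t₂: |Ku(x,t₂) − Ku(x,t₁)| ≤ ( |k(0)| + 2∫₀^∞ |k′(r)| dr ) · ‖φ‖_{L²(ℝⁿ)} · A · (t₂ − t₁). -/
/-!
Write `Ku(x,t) = ∫₀ᵗ k(t-s) g(s) ds` with `g(s) = ∫ φ(x-y) u(y,s) dy`; by Cauchy–Schwarz and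
translation invariance, `|g| ≤ ‖φ‖₂ A`. Then
`Ku(x,t₂) - Ku(x,t₁) = ∫₀^{t₁} (k(t₂-s) - k(t₁-s)) g(s) ds + ∫_{t₁}^{t₂} k(t₂-s) g(s) ds`.
The second term is at most `(|k 0| + ∫|k'|) ‖φ‖₂ A (t₂-t₁)` since `|k| ≤ |k 0| + ∫|k'|` on
`[0,∞)`. In the first, `|k(t₂-s) - k(t₁-s)| ≤ ∫_{t₁-s}^{t₂-s} |k'|`, and every point of `(0,∞)`
lies in the windows `(t₁-s, t₂-s]` for a set of `s` of length at most `t₂-t₁`, so integrating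
over `s` gives at most `(t₂-t₁) ∫|k'|`.
-/

open Set Metric MeasureTheory ENNReal

noncomputable section

lemma abs_integral_mul_le_eLpNorm_mul_eLpNorm {α : Type*} [MeasurableSpace α] {μ : Measure α}
    {f g : α → ℝ} (hf : MemLp f 2 μ) (hg : MemLp g 2 μ) :
    |∫ a, f a * g a ∂μ| ≤ (eLpNorm f 2 μ).toReal * (eLpNorm g 2 μ).toReal := by
  have h_inner : ∫ a, f a * g a ∂μ = inner ℝ (hf.toLp f) (hg.toLp g) := by
    rw [L2.inner_def]
    refine integral_congr_ae ?_
    filter_upwards [hf.coeFn_toLp, hg.coeFn_toLp] with a hfa hga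
    simp [hfa, hga, mul_comm]
  rw [h_inner, ← Lp.norm_toLp f hf, ← Lp.norm_toLp g hg]
  exact abs_real_inner_le_norm _ _

lemma abs_integral_sub_mul_le {G : Type*} [MeasurableSpace G] [AddCommGroup G] [MeasurableAdd G]
    [MeasurableNeg G] {μ : Measure G} [μ.IsNegInvariant] [μ.IsAddLeftInvariant] {φ v : G → ℝ}
    (hφ : MemLp φ 2 μ) (hv : MemLp v 2 μ) (x : G) :
    |∫ y, φ (x - y) * v y ∂μ| ≤ (eLpNorm φ 2 μ).toReal * (eLpNorm v 2 μ).toReal := by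
  have hmp := μ.measurePreserving_sub_left x
  simpa only [eLpNorm_comp_measurePreserving hφ.1 hmp, Function.comp_apply] using
    abs_integral_mul_le_eLpNorm_mul_eLpNorm (hφ.comp_measurePreserving hmp) hv

lemma aestronglyMeasurable_integral_mul {α β : Type*} [MeasurableSpace α] [MeasurableSpace β]
    {μ : Measure α} {ν : Measure β} [SFinite μ] [SFinite ν] {ψ : β → ℝ} {u : β → α → ℝ}
    (hψ : AEStronglyMeasurable ψ ν) (hu : AEStronglyMeasurable (Function.uncurry u) (ν.prod μ)) :
    AEStronglyMeasurable (fun s => ∫ y, ψ y * u y s ∂ν) μ :=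
  (hψ.comp_snd.mul hu.prod_swap).integral_prod_right'

section Primitive

variable {h : ℝ → ℝ}

lemma continuous_intervalIntegral_of_integrable (hh : Integrable h) {a b : ℝ → ℝ}
    (ha : Continuous a) (hb : Continuous b) : Continuous fun s => ∫ q in a s..b s, h q := by
  have hH := intervalIntegral.continuous_primitive (fun _ _ => hh.intervalIntegrable) 0
  have hsub : ∀ s, ∫ q in a s..b s, h q = (∫ q in 0..b s, h q) - ∫ q in 0..a s, h q := fun s =>
    (intervalIntegral.integral_interval_sub_left hh.intervalIntegrable hh.intervalIntegrable).symm
  simp_rw [hsub]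
  exact (hH.comp hb).sub (hH.comp ha)

lemma abs_intervalIntegral_le_integral_abs (hh : Integrable h) (a b : ℝ) :
    |∫ q in a..b, h q| ≤ ∫ q, |h q| :=
  intervalIntegral.norm_integral_le_integral_norm_uIoc.trans
    (setIntegral_le_integral hh.norm (ae_of_all _ fun _ => norm_nonneg _))

lemma integral_intervalIntegral_window_le (h0 : 0 ≤ h) (hh : Integrable h) {t₁ t₂ : ℝ}
    (ht : t₁ ≤ t₂) : ∫ s in 0..t₁, ∫ q in (t₁ - s)..(t₂ - s), h q ≤ (t₂ - t₁) * ∫ q, h q := by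
  set H : ℝ → ℝ := fun r => ∫ q in 0..r, h q
  have hH : Continuous H :=
    intervalIntegral.continuous_primitive (fun _ _ => hh.intervalIntegrable) 0
  have hHi : ∀ a b, IntervalIntegrable H volume a b := fun a b => hH.intervalIntegrable a b
  have hsub : ∀ a b, ∫ q in a..b, h q = H b - H a := fun a b =>
    (intervalIntegral.integral_interval_sub_left hh.intervalIntegrable hh.intervalIntegrable).symm
  have hshift : ∫ s in 0..t₁, (H (t₂ - s) - H (t₁ - s)) =
      (∫ r in t₁..t₂, H r) - ∫ r in 0..(t₂ - t₁), H r := by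
    have hc : ∀ t, Continuous fun s => H (t - s) := fun t => hH.comp (continuous_sub_left t)
    rw [intervalIntegral.integral_sub ((hc t₂).intervalIntegrable _ _)
      ((hc t₁).intervalIntegrable _ _),
      intervalIntegral.integral_comp_sub_left H t₂, intervalIntegral.integral_comp_sub_left H t₁]
    simp only [sub_self, sub_zero]
    linarith [intervalIntegral.integral_add_adjacent_intervals (hHi 0 (t₂ - t₁)) (hHi _ t₂),
      intervalIntegral.integral_add_adjacent_intervals (hHi 0 t₁) (hHi t₁ t₂)]
  have hH_le : ∀ r, H r ≤ ∫ q, h q := fun r =>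
    calc H r ≤ |H r| := le_abs_self _
      _ ≤ ∫ q, |h q| := abs_intervalIntegral_le_integral_abs hh 0 r
      _ = ∫ q, h q := congr_arg _ (funext fun q => abs_of_nonneg (h0 q))
  have hupper : ∫ r in t₁..t₂, H r ≤ (t₂ - t₁) * ∫ q, h q := by
    have := intervalIntegral.integral_mono_on ht (hHi t₁ t₂) intervalIntegrable_const
      fun r _ => hH_le r
    rwa [intervalIntegral.integral_const, smul_eq_mul] at this
  have hlower : 0 ≤ ∫ r in 0..(t₂ - t₁), H r :=
    intervalIntegral.integral_nonneg (by linarith) fun r hr =>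
      intervalIntegral.integral_nonneg hr.1 fun q _ => h0 q
  simp only [hsub]
  linarith

end Primitive

section Kernel

variable {k f : ℝ → ℝ} (hf : Integrable f) (hk : ∀ r, 0 ≤ r → k r = k 0 + ∫ s in 0..r, f s)
include hf hk

lemma abs_le_of_eq_add_integral {r : ℝ} (hr : 0 ≤ r) : |k r| ≤ |k 0| + ∫ q, |f q| := by
  rw [hk r hr]
  exact (abs_add_le _ _).trans (add_le_add_right (abs_intervalIntegral_le_integral_abs hf 0 r) _)

lemma abs_sub_le_of_eq_add_integral {a b : ℝ} (ha : 0 ≤ a) (hab : a ≤ b) :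
    |k b - k a| ≤ ∫ q in a..b, |f q| := by
  rw [hk a ha, hk b (ha.trans hab), add_sub_add_left_eq_sub,
    intervalIntegral.integral_interval_sub_left hf.intervalIntegrable hf.intervalIntegrable]
  exact intervalIntegral.abs_integral_le_integral_abs hab

lemma continuousOn_of_eq_add_integral : ContinuousOn k (Ici 0) := by
  have hP := intervalIntegral.continuous_primitive (fun _ _ => hf.intervalIntegrable) 0
  exact (continuous_const.add hP).continuousOn.congr hk

end Kernel

def timeConvolution (k g : ℝ → ℝ) (t : ℝ) : ℝ := ∫ s in 0..t, k (t - s) * g s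

section TimeConvolution

variable {k f g : ℝ → ℝ} {C : ℝ} (hf : Integrable f)
  (hk : ∀ r, 0 ≤ r → k r = k 0 + ∫ s in 0..r, f s) (hgC : ∀ᵐ s ∂volume.restrict (Ioi 0), |g s| ≤ C)
include hf hk hgC

lemma ae_abs_kernel_mul_le (t : ℝ) :
    ∀ᵐ s, s ∈ Ioc 0 t → |k (t - s) * g s| ≤ (|k 0| + ∫ q, |f q|) * C := by
  filter_upwards [(ae_restrict_iff' measurableSet_Ioi).1 hgC] with s hs hst
  rw [abs_mul]
  exact mul_le_mul (abs_le_of_eq_add_integral hf hk (sub_nonneg.2 hst.2)) (hs hst.1)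
    (abs_nonneg _) (add_nonneg (abs_nonneg _) (integral_nonneg fun _ => abs_nonneg _))

lemma intervalIntegrable_kernel_mul (hg : AEStronglyMeasurable g (volume.restrict (Ioi 0)))
    {t : ℝ} (ht : 0 ≤ t) : IntervalIntegrable (fun s => k (t - s) * g s) volume 0 t := by
  rw [intervalIntegrable_iff_integrableOn_Ioc_of_le ht]
  have hk_meas : AEStronglyMeasurable (fun s => k (t - s)) (volume.restrict (Ioc 0 t)) :=
    ((continuousOn_of_eq_add_integral hf hk).comp (continuous_sub_left t).continuousOn
      fun s hs => sub_nonneg.2 hs.2).aestronglyMeasurable measurableSet_Ioc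
  exact Integrable.mono' (integrableOn_const measure_Ioc_lt_top.ne)
    (hk_meas.mul (hg.mono_measure (Measure.restrict_mono Ioc_subset_Ioi_self le_rfl)))
    ((ae_restrict_iff' measurableSet_Ioc).2 (ae_abs_kernel_mul_le hf hk hgC t))

lemma abs_integral_kernel_sub_mul_le (hC : 0 ≤ C) {t₁ t₂ : ℝ} (ht₁ : 0 ≤ t₁) (ht : t₁ ≤ t₂) :
    |∫ s in 0..t₁, (k (t₂ - s) - k (t₁ - s)) * g s| ≤ (t₂ - t₁) * (∫ q, |f q|) * C := by
  have hbound : ∀ᵐ s, s ∈ Ioc 0 t₁ →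
      ‖(k (t₂ - s) - k (t₁ - s)) * g s‖ ≤ (∫ q in (t₁ - s)..(t₂ - s), |f q|) * C := by
    filter_upwards [(ae_restrict_iff' measurableSet_Ioi).1 hgC] with s hs hst
    rw [Real.norm_eq_abs, abs_mul]
    exact mul_le_mul (abs_sub_le_of_eq_add_integral hf hk (by linarith [hst.2]) (by linarith))
      (hs hst.1) (abs_nonneg _)
      (intervalIntegral.integral_nonneg (by linarith) fun _ _ => abs_nonneg _)
  have hmajorant := continuous_intervalIntegral_of_integrable hf.abs (continuous_sub_left t₁)
    (continuous_sub_left t₂)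
  calc _ ≤ ∫ s in 0..t₁, (∫ q in (t₁ - s)..(t₂ - s), |f q|) * C :=
        intervalIntegral.norm_integral_le_of_norm_le ht₁ hbound
          ((hmajorant.mul continuous_const).intervalIntegrable _ _)
    _ = (∫ s in 0..t₁, ∫ q in (t₁ - s)..(t₂ - s), |f q|) * C :=
        intervalIntegral.integral_mul_const _ _
    _ ≤ (t₂ - t₁) * (∫ q, |f q|) * C := mul_le_mul_of_nonneg_right
        (integral_intervalIntegral_window_le (fun _ => abs_nonneg _) hf.abs ht) hC

lemma abs_integral_kernel_mul_le {t₁ t₂ : ℝ} (ht₁ : 0 ≤ t₁) (ht : t₁ ≤ t₂) :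
    |∫ s in t₁..t₂, k (t₂ - s) * g s| ≤ (|k 0| + ∫ q, |f q|) * C * (t₂ - t₁) := by
  have hbound : ∀ᵐ s, s ∈ Ioc t₁ t₂ → ‖k (t₂ - s) * g s‖ ≤ (|k 0| + ∫ q, |f q|) * C := by
    filter_upwards [ae_abs_kernel_mul_le hf hk hgC t₂] with s hs hst
    exact hs (Ioc_subset_Ioc_left ht₁ hst)
  have := intervalIntegral.norm_integral_le_of_norm_le ht hbound intervalIntegrable_const
  rwa [intervalIntegral.integral_const, smul_eq_mul, mul_comm (t₂ - t₁)] at this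

theorem abs_timeConvolution_sub_le (hg : AEStronglyMeasurable g (volume.restrict (Ioi 0)))
    (hC : 0 ≤ C) {t₁ t₂ : ℝ} (ht₁ : 0 ≤ t₁) (ht : t₁ ≤ t₂) :
    |timeConvolution k g t₂ - timeConvolution k g t₁| ≤
      (|k 0| + 2 * ∫ q, |f q|) * C * (t₂ - t₁) := by
  have hi₂ := intervalIntegrable_kernel_mul hf hk hgC hg (ht₁.trans ht)
  have hi₂_left : IntervalIntegrable _ volume 0 t₁ :=
    hi₂.mono_set (uIcc_subset_uIcc left_mem_uIcc (mem_uIcc_of_le ht₁ ht))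
  have hi₂_right : IntervalIntegrable _ volume t₁ t₂ :=
    hi₂.mono_set (uIcc_subset_uIcc (mem_uIcc_of_le ht₁ ht) right_mem_uIcc)
  have hsplit : timeConvolution k g t₂ - timeConvolution k g t₁ =
      (∫ s in 0..t₁, (k (t₂ - s) - k (t₁ - s)) * g s) + ∫ s in t₁..t₂, k (t₂ - s) * g s := by
    simp only [timeConvolution, sub_mul]
    rw [intervalIntegral.integral_sub hi₂_left (intervalIntegrable_kernel_mul hf hk hgC hg ht₁),
      ← intervalIntegral.integral_add_adjacent_intervals hi₂_left hi₂_right]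
    ring
  rw [hsplit]
  calc _ ≤ (t₂ - t₁) * (∫ q, |f q|) * C + (|k 0| + ∫ q, |f q|) * C * (t₂ - t₁) :=
        (abs_add_le _ _).trans (add_le_add (abs_integral_kernel_sub_mul_le hf hk hgC hC ht₁ ht)
          (abs_integral_kernel_mul_le hf hk hgC ht₁ ht))
    _ = (|k 0| + 2 * ∫ q, |f q|) * C * (t₂ - t₁) := by ring

end TimeConvolution

lemma eq_add_integral_indicator_Ioi {k k' : ℝ → ℝ}
    (hk : ∀ r, 0 ≤ r → k r = k 0 + ∫ s in 0..r, k' s) (r : ℝ) (hr : 0 ≤ r) :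
    k r = k 0 + ∫ s in 0..r, (Ioi 0).indicator k' s := by
  rw [hk r hr, intervalIntegral.integral_of_le hr, intervalIntegral.integral_of_le hr,
    setIntegral_indicator measurableSet_Ioi, Ioc_inter_Ioi, sup_idem]

lemma integral_abs_indicator {s : Set ℝ} (hs : MeasurableSet s) (f : ℝ → ℝ) :
    ∫ r, |s.indicator f r| = ∫ r in s, |f r| := by
  simp_rw [← Real.norm_eq_abs, norm_indicator_eq_indicator_norm]
  exact integral_indicator hs

theorem convolution_time_lipschitz_general
    {n : ℕ} (A : ℝ) (hA : 0 ≤ A)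
    (k k' : ℝ → ℝ) (hk' : IntegrableOn k' (Ioi (0:ℝ)))
    (hk : ∀ r : ℝ, 0 ≤ r → k r = k 0 + ∫ s in (0:ℝ)..r, k' s)
    (φ : Euc n → ℝ) (hφ : MemLp φ 2 volume)
    (u : Euc n → ℝ → ℝ) (hu_meas : Measurable (Function.uncurry u))
    (hu : ∀ᵐ s ∂(volume.restrict (Ioi (0:ℝ))),
      MemLp (fun y => u y s) 2 volume ∧
      eLpNorm (fun y => u y s) 2 volume ≤ ENNReal.ofReal A)
    (Ku : Euc n → ℝ → ℝ)
    (hKu : ∀ x : Euc n, ∀ t : ℝ,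
      Ku x t = ∫ s in (0:ℝ)..t, ∫ y : Euc n, k (t - s) * φ (x - y) * u y s) :
    ∀ x : Euc n, ∀ t₁ t₂ : ℝ, 0 ≤ t₁ → t₁ ≤ t₂ →
      |Ku x t₂ - Ku x t₁| ≤
        (|k 0| + 2 * ∫ r in Ioi (0:ℝ), |k' r|) * (eLpNorm φ 2 volume).toReal * A *
          (t₂ - t₁) := by
  intro x t₁ t₂ ht₁ ht
  set g : ℝ → ℝ := fun s => ∫ y, φ (x - y) * u y s
  have hKu_eq : ∀ t, Ku x t = timeConvolution k g t := fun t => by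
    simp only [hKu, timeConvolution, g, ← integral_const_mul, mul_assoc]
  have hg_meas : AEStronglyMeasurable g (volume.restrict (Ioi 0)) :=
    aestronglyMeasurable_integral_mul
      (hφ.comp_measurePreserving (volume.measurePreserving_sub_left x)).1
      hu_meas.aestronglyMeasurable
  have hg_bound : ∀ᵐ s ∂volume.restrict (Ioi 0), |g s| ≤ (eLpNorm φ 2 volume).toReal * A := by
    filter_upwards [hu] with s ⟨hs, hsA⟩
    exact (abs_integral_sub_mul_le hφ hs x).trans
      (mul_le_mul_of_nonneg_left (toReal_le_of_le_ofReal hA hsA) toReal_nonneg)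
  have := abs_timeConvolution_sub_le (hk'.integrable_indicator measurableSet_Ioi)
    (eq_add_integral_indicator_Ioi hk) hg_bound hg_meas (by positivity) ht₁ ht
  rw [hKu_eq, hKu_eq, ← integral_abs_indicator measurableSet_Ioi]
  simpa only [mul_assoc] using this

/-- The space–time convolution
`Ku(x,t) = ∫₀ᵗ ∫ k(t−s) φ(x−y) u(y,s) dy ds` is Lipschitz in time:
`|Ku(x,t₂) − Ku(x,t₁)| ≤ (|k(0)| + 2∫₀^∞|k′|) ‖φ‖_{L²} A (t₂ − t₁)`. -/
theorem convolution_time_lipschitz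
    {n : ℕ} (hn : 1 ≤ n) (A : ℝ) (hA : 0 ≤ A)
    (k k' : ℝ → ℝ) (hk' : IntegrableOn k' (Ioi (0:ℝ)))
    (hk : ∀ r : ℝ, 0 ≤ r → k r = k 0 + ∫ s in (0:ℝ)..r, k' s)
    (φ : Euc n → ℝ) (hφ : MemLp φ 2 volume)
    (u : Euc n → ℝ → ℝ) (hu_meas : Measurable (Function.uncurry u))
    (hu : ∀ᵐ s ∂(volume.restrict (Ioi (0:ℝ))),
      MemLp (fun y => u y s) 2 volume ∧
      eLpNorm (fun y => u y s) 2 volume ≤ ENNReal.ofReal A)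
    (Ku : Euc n → ℝ → ℝ)
    (hKu : ∀ x : Euc n, ∀ t : ℝ,
      Ku x t = ∫ s in (0:ℝ)..t, ∫ y : Euc n, k (t - s) * φ (x - y) * u y s) :
    ∀ x : Euc n, ∀ t₁ t₂ : ℝ, 0 ≤ t₁ → t₁ ≤ t₂ →
      |Ku x t₂ - Ku x t₁| ≤
        (|k 0| + 2 * ∫ r in Ioi (0:ℝ), |k' r|) * (eLpNorm φ 2 volume).toReal * A *
          (t₂ - t₁) :=
  convolution_time_lipschitz_general A hA k k' hk' hk φ hφ u hu_meas hu Ku hKu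
end
end

section
/- Let S ⊆ ℝⁿ be a nonempty closed set, ℓ ≥ 0, δ ≥ 0, and let γ : [0,ℓ] → ℝⁿ be 1-Lipschitz with γ(ℓ) ∈ S. If the Lebesgue measure of { s ∈ [0,ℓ] : γ(s) ∉ S } is at most δ, then dist(γ(s), S) ≤ δ for every s ∈ [0,ℓ]. -/
open Set Metric MeasureTheory

noncomputable section

/-- If a 1-Lipschitz curve `γ : [0,ℓ] → ℝⁿ` ends in the nonempty closed
set `S` and the set of times at which it is outside `S` has measure at most `δ`, then
every point of the curve is within distance `δ` of `S`. -/
theorem curve_close_to_set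
    {n : ℕ} (hn : 1 ≤ n)
    (S : Set (Euc n)) (hSne : S.Nonempty) (hScl : IsClosed S)
    (ℓ δ : ℝ) (hℓ : 0 ≤ ℓ) (hδ : 0 ≤ δ)
    (γ : ℝ → Euc n) (hγ : LipschitzOnWith 1 γ (Icc 0 ℓ))
    (hend : γ ℓ ∈ S)
    (hmeas : volume {s ∈ Icc (0:ℝ) ℓ | γ s ∉ S} ≤ ENNReal.ofReal δ) :
    ∀ s ∈ Icc (0:ℝ) ℓ, infDist (γ s) S ≤ δ := by
  intro s hs
  set T : Set ℝ := Icc s ℓ ∩ γ ⁻¹' S with hT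
  have hsub : Icc s ℓ ⊆ Icc 0 ℓ := Icc_subset_Icc hs.1 le_rfl
  have hTcl : IsClosed T :=
    ContinuousOn.preimage_isClosed_of_isClosed (hγ.continuousOn.mono hsub)
      isClosed_Icc hScl
  have hTne : T.Nonempty := ⟨ℓ, ⟨hs.2, le_rfl⟩, hend⟩
  have hTbdd : BddBelow T := ⟨s, fun t ht => ht.1.1⟩
  set t₀ := sInf T with ht₀
  have ht₀T : t₀ ∈ T := hTcl.csInf_mem hTne hTbdd
  have hst₀ : s ≤ t₀ := ht₀T.1.1
  have hsubout : Ico s t₀ ⊆ {u ∈ Icc (0:ℝ) ℓ | γ u ∉ S} := by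
    intro t ht
    have htℓ : t ≤ ℓ := le_trans ht.2.le ht₀T.1.2
    refine ⟨⟨le_trans hs.1 ht.1, htℓ⟩, fun hγt => ?_⟩
    exact absurd (csInf_le hTbdd ⟨⟨ht.1, htℓ⟩, hγt⟩) (not_le.mpr ht.2)
  have hvol : ENNReal.ofReal (t₀ - s) ≤ ENNReal.ofReal δ := by
    calc ENNReal.ofReal (t₀ - s) = volume (Ico s t₀) := (Real.volume_Ico).symm
    _ ≤ _ := le_trans (measure_mono hsubout) hmeas
  have hle : t₀ - s ≤ δ := by
    rwa [ENNReal.ofReal_le_ofReal_iff hδ] at hvol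
  have hdist : dist (γ s) (γ t₀) ≤ t₀ - s := by
    have := hγ.dist_le_mul s hs t₀ (hsub ht₀T.1)
    simpa [Real.dist_eq, abs_of_nonpos, sub_nonpos.mpr hst₀] using this
  calc infDist (γ s) S ≤ dist (γ s) (γ t₀) := infDist_le_dist_of_mem ht₀T.2
  _ ≤ t₀ - s := hdist
  _ ≤ δ := hle
end
end

section
/- Define γ̃(s) := γ(s) + η(γ(s)) · (ε₀ − dist(γ(s), F))⁺ · (κ̃/ε₀) · s for s ∈ [0,ℓ], where a⁺ := max(a,0). Then: (i) |γ̃(s) − γ(s)| ≤ κ̃ s for all s ∈ [0,ℓ]; (ii) γ̃ is Lipschitz with constant M := 1 + κ̃ (L_η T + T/ε₀ + 1); (iii) if moreover γ is differentiable a.e. with |γ′(s)| = 1 for a.e. s, then at a.e. point s where γ̃ is differentiable, |γ̃′(s)| ≥ 1 − κ̃ (L_η T + T/ε₀ + 1) = 2 − M. -/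
open Set Metric MeasureTheory

noncomputable section

/-- The inward displacement
`γ̃(s) = γ(s) + η(γ(s))·(ε₀ − dist(γ(s),F))⁺·(κ̃/ε₀)·s` of a 1-Lipschitz curve `γ`
satisfies `|γ̃(s) − γ(s)| ≤ κ̃ s`, is Lipschitz with constant
`M = 1 + κ̃(L_η T + T/ε₀ + 1)`, and, if `|γ′| = 1` a.e., its derivative satisfies
`|γ̃′| ≥ 2 − M` a.e. where it exists. -/
theorem displaced_curve_properties
    {n : ℕ} (hn : 1 ≤ n)
    (F : Set (Euc n)) (hF : F.Nonempty)
    (ε₀ κ T ℓ : ℝ) (hε₀ : 0 < ε₀) (hκ : 0 < κ) (hT : 0 < T) (hℓ0 : 0 ≤ ℓ) (hℓT : ℓ ≤ T)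
    (η : Euc n → Euc n) (Lη : NNReal) (hη : LipschitzWith Lη η) (hη1 : ∀ z, ‖η z‖ ≤ 1)
    (γ : ℝ → Euc n) (hγ : LipschitzOnWith 1 γ (Icc 0 ℓ))
    (γt : ℝ → Euc n)
    (hγt : ∀ s : ℝ, γt s = γ s + (max (ε₀ - infDist (γ s) F) 0 * (κ / ε₀) * s) • η (γ s))
    (M : ℝ) (hM : M = 1 + κ * ((Lη : ℝ) * T + T / ε₀ + 1)) :
    (∀ s ∈ Icc (0:ℝ) ℓ, ‖γt s - γ s‖ ≤ κ * s) ∧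
    (∀ s ∈ Icc (0:ℝ) ℓ, ∀ t ∈ Icc (0:ℝ) ℓ, ‖γt s - γt t‖ ≤ M * |s - t|) ∧
    ((∀ᵐ s ∂(volume.restrict (Icc (0:ℝ) ℓ)), DifferentiableAt ℝ γ s ∧ ‖deriv γ s‖ = 1) →
      ∀ᵐ s ∂(volume.restrict (Icc (0:ℝ) ℓ)),
        DifferentiableAt ℝ γt s → 2 - M ≤ ‖deriv γt s‖) := by
  set g : ℝ → ℝ := fun s => max (ε₀ - infDist (γ s) F) 0 with hgdef
  set φ : ℝ → ℝ := fun s => g s * (κ / ε₀) * s with hφdef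
  have hcorr : ∀ s, γt s - γ s = φ s • η (γ s) := by
    intro s; rw [hγt s]; simp [hφdef, hgdef]
  have hγd : ∀ s ∈ Icc (0:ℝ) ℓ, ∀ t ∈ Icc (0:ℝ) ℓ, ‖γ s - γ t‖ ≤ |s - t| := by
    intro s hs t ht
    have := hγ.dist_le_mul s hs t ht
    simpa [dist_eq_norm, Real.dist_eq] using this
  have hg0 : ∀ s, 0 ≤ g s := fun s => le_max_right _ _
  have hgε : ∀ s, g s ≤ ε₀ := by
    intro s
    apply max_le _ hε₀.le
    have := infDist_nonneg (s := F) (x := γ s)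
    linarith
  have hglip : ∀ s t, |g s - g t| ≤ ‖γ s - γ t‖ := by
    intro s t
    have h1 : |g s - g t| ≤ |(ε₀ - infDist (γ s) F) - (ε₀ - infDist (γ t) F)| :=
      abs_max_sub_max_le_abs _ _ _
    have h2 : |(ε₀ - infDist (γ s) F) - (ε₀ - infDist (γ t) F)|
        = |infDist (γ t) F - infDist (γ s) F| := by ring_nf
    have h3 := (lipschitz_infDist_pt F).dist_le_mul (γ t) (γ s)
    rw [Real.dist_eq, dist_eq_norm] at h3
    calc |g s - g t| ≤ |infDist (γ t) F - infDist (γ s) F| := h2 ▸ h1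
      _ ≤ 1 * ‖γ t - γ s‖ := h3
      _ = ‖γ s - γ t‖ := by rw [one_mul, norm_sub_rev]
  have hφnn : ∀ s ∈ Icc (0:ℝ) ℓ, 0 ≤ φ s := by
    intro s hs
    have := hg0 s
    have := hs.1
    positivity
  have hφle : ∀ s ∈ Icc (0:ℝ) ℓ, φ s ≤ κ * s := by
    intro s hs
    have h1 : g s * (κ / ε₀) * s ≤ ε₀ * (κ / ε₀) * s := by
      have : (0:ℝ) ≤ κ / ε₀ := by positivity
      nlinarith [mul_nonneg (mul_nonneg (sub_nonneg.mpr (hgε s)) this) hs.1]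
    have h2 : ε₀ * (κ / ε₀) = κ := by field_simp
    calc φ s ≤ ε₀ * (κ / ε₀) * s := h1
      _ = κ * s := by rw [h2]
  have hφlip : ∀ s ∈ Icc (0:ℝ) ℓ, ∀ t ∈ Icc (0:ℝ) ℓ,
      |φ s - φ t| ≤ κ * (T / ε₀ + 1) * |s - t| := by
    intro s hs t ht
    have h1 : |g s - g t| ≤ |s - t| := (hglip s t).trans (hγd s hs t ht)
    have hsT : |s| ≤ T := by rw [abs_of_nonneg hs.1]; exact hs.2.trans hℓT
    have key : |g s * s - g t * t| ≤ T * |s - t| + ε₀ * |s - t| := by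
      have hsplit : g s * s - g t * t = (g s - g t) * s + g t * (s - t) := by ring
      rw [hsplit]
      calc |(g s - g t) * s + g t * (s - t)| ≤ |(g s - g t) * s| + |g t * (s - t)| :=
            abs_add_le _ _
        _ = |g s - g t| * |s| + |g t| * |s - t| := by rw [abs_mul, abs_mul]
        _ ≤ |s - t| * T + ε₀ * |s - t| := by
            gcongr
            · rw [abs_of_nonneg (hg0 t)]; exact hgε t
        _ = T * |s - t| + ε₀ * |s - t| := by ring
    have hsplit2 : φ s - φ t = (κ / ε₀) * (g s * s - g t * t) := by
      simp only [hφdef]; ring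
    rw [hsplit2, abs_mul, abs_of_nonneg (by positivity : (0:ℝ) ≤ κ / ε₀)]
    calc (κ / ε₀) * |g s * s - g t * t| ≤ (κ / ε₀) * (T * |s - t| + ε₀ * |s - t|) := by
          gcongr
      _ = κ * (T / ε₀ + 1) * |s - t| := by field_simp
  have hhlip : ∀ s ∈ Icc (0:ℝ) ℓ, ∀ t ∈ Icc (0:ℝ) ℓ,
      ‖(γt s - γ s) - (γt t - γ t)‖ ≤ (M - 1) * |s - t| := by
    intro s hs t ht
    rw [hcorr, hcorr]
    have split : φ s • η (γ s) - φ t • η (γ t)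
        = (φ s - φ t) • η (γ s) + φ t • (η (γ s) - η (γ t)) := by
      rw [sub_smul, smul_sub]; abel
    rw [split]
    have hηd : ‖η (γ s) - η (γ t)‖ ≤ (Lη : ℝ) * |s - t| := by
      have h1 := hη.dist_le_mul (γ s) (γ t)
      rw [dist_eq_norm, dist_eq_norm] at h1
      calc ‖η (γ s) - η (γ t)‖ ≤ (Lη : ℝ) * ‖γ s - γ t‖ := h1
        _ ≤ (Lη : ℝ) * |s - t| := by gcongr; exact hγd s hs t ht
    have hφt : φ t ≤ κ * T := by
      calc φ t ≤ κ * t := hφle t ht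
        _ ≤ κ * T := by gcongr; exact ht.2.trans hℓT
    calc ‖(φ s - φ t) • η (γ s) + φ t • (η (γ s) - η (γ t))‖
        ≤ ‖(φ s - φ t) • η (γ s)‖ + ‖φ t • (η (γ s) - η (γ t))‖ := norm_add_le _ _
      _ = |φ s - φ t| * ‖η (γ s)‖ + |φ t| * ‖η (γ s) - η (γ t)‖ := by
          rw [norm_smul, norm_smul, Real.norm_eq_abs, Real.norm_eq_abs]
      _ ≤ (κ * (T / ε₀ + 1) * |s - t|) * 1 + (κ * T) * ((Lη : ℝ) * |s - t|) := by
          gcongr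
          · exact hφlip s hs t ht
          · exact hη1 _
          · rw [abs_of_nonneg (hφnn t ht)]; exact hφt
      _ = (M - 1) * |s - t| := by rw [hM]; ring
  refine ⟨?_, ?_, ?_⟩
  · intro s hs
    rw [hcorr, norm_smul, Real.norm_eq_abs, abs_of_nonneg (hφnn s hs)]
    calc φ s * ‖η (γ s)‖ ≤ φ s * 1 := by
          have := hφnn s hs; gcongr; exact hη1 _
      _ = φ s := mul_one _
      _ ≤ κ * s := hφle s hs
  · intro s hs t ht
    have hsplit : γt s - γt t = (γ s - γ t) + ((γt s - γ s) - (γt t - γ t)) := by abel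
    rw [hsplit]
    calc ‖(γ s - γ t) + ((γt s - γ s) - (γt t - γ t))‖
        ≤ ‖γ s - γ t‖ + ‖(γt s - γ s) - (γt t - γ t)‖ := norm_add_le _ _
      _ ≤ |s - t| + (M - 1) * |s - t| := add_le_add (hγd s hs t ht) (hhlip s hs t ht)
      _ = M * |s - t| := by ring
  · intro hae
    have hIoo : ∀ᵐ s ∂(volume.restrict (Icc (0:ℝ) ℓ)), s ∈ Ioo (0:ℝ) ℓ := by
      have hcnt : (({0, ℓ} : Set ℝ)).Countable :=
        ((Set.finite_singleton ℓ).insert 0).countable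
      have hne : ∀ᵐ s : ℝ ∂volume, s ∉ ({0, ℓ} : Set ℝ) :=
        measure_eq_zero_iff_ae_notMem.mp (hcnt.measure_zero _)
      rw [ae_restrict_iff' measurableSet_Icc]
      filter_upwards [hne] with s hs hmem
      simp only [Set.mem_insert_iff, Set.mem_singleton_iff] at hs
      push_neg at hs
      exact ⟨hmem.1.lt_of_ne (fun h => hs.1 h.symm), hmem.2.lt_of_ne hs.2⟩
    filter_upwards [hae, hIoo] with s hγs hsIoo hdiff
    have hhd : DifferentiableAt ℝ (fun u => γt u - γ u) s := hdiff.sub hγs.1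
    have hK : ‖deriv (fun u => γt u - γ u) s‖ ≤ M - 1 := by
      have hslope := hhd.hasDerivAt
      rw [hasDerivAt_iff_tendsto_slope] at hslope
      have hbound : ∀ᶠ t in nhdsWithin s {s}ᶜ,
          ‖slope (fun u => γt u - γ u) s t‖ ≤ M - 1 := by
        have hmem : Ioo (0:ℝ) ℓ ∈ nhdsWithin s ({s}ᶜ : Set ℝ) :=
          nhdsWithin_le_nhds (isOpen_Ioo.mem_nhds hsIoo)
        filter_upwards [hmem, self_mem_nhdsWithin] with t ht hts
        have htne : t - s ≠ 0 := sub_ne_zero.mpr hts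
        rw [slope_def_module, norm_smul, Real.norm_eq_abs, abs_inv]
        rw [inv_mul_le_iff₀ (abs_pos.mpr htne)]
        have := hhlip t (Ioo_subset_Icc_self ht) s (Ioo_subset_Icc_self hsIoo)
        calc ‖(γt t - γ t) - (γt s - γ s)‖ ≤ (M - 1) * |t - s| := this
          _ = |t - s| * (M - 1) := by ring
      exact le_of_tendsto hslope.norm hbound
    have hderiv : deriv (fun u => γt u - γ u) s = deriv γt s - deriv γ s :=
      deriv_sub hdiff hγs.1
    have h1 : ‖deriv γ s‖ ≤ ‖deriv γt s‖ + ‖deriv (fun u => γt u - γ u) s‖ := by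
      have heq : deriv γ s = deriv γt s - deriv (fun u => γt u - γ u) s := by
        rw [hderiv]; abel
      rw [heq]
      exact norm_sub_le _ _
    rw [hγs.2] at h1
    linarith
end
end
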